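/- arXiv:1908.03915 — 4 statements merged into one kernel-verified Lean document; each statement's English description precedes it below -/
import Mathlib

section
/- Transformation identities for radial functions: Let N ≥ 2, 1 < p < N, 0 ≤ s ≤ p, p*(s) = p(N−s)/(N−p), β(s) = ((N−1)p − (p−1)s)/(N−p), 0 < R ≤ T ≤ ∞ (with the convention 1/∞ = 0). Let w ∈ C_c^1(B_T) be radial and define the radial function u on B_R by u(r) = w(t), where r ∈ (0,R) and t ∈ (0,T) are related by r^{−(N−p)/(p−1)} − R^{−(N−p)/(p−1)} = t^{−(N−p)/(p−1)} − T^{−(N−p)/(p−1)}. Set a = 1 − (R/T)^{(N−p)/(p−1)}. Then: (1) ∫_{B_T}|∇w(y)|^p dy = ∫_{B_R}|∇u(x)|^p dx, and (2) ∫_{B_T}|w(y)|^{p*(s)} |y|^{−s} dy = ∫_{B_R} |u(x)|^{p*(s)} |x|^{−s} (1 − a(|x|/R)^{(N−p)/(p−1)})^{−β(s)} dx. -/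
open MeasureTheory Metric Set Filter

noncomputable section

namespace HS

abbrev Euc (N : ℕ) := EuclideanSpace ℝ (Fin N)

/-- smooth compactly supported test functions in the ball `B_R`. -/
def IsTest (N : ℕ) (R : ℝ) (u : Euc N → ℝ) : Prop :=
  ContDiff ℝ (⊤ : ℕ∞) u ∧ HasCompactSupport u ∧ tsupport u ⊆ ball (0 : Euc N) R

/-- a function is radial if it only depends on the norm. -/
def IsRadial {N : ℕ} (u : Euc N → ℝ) : Prop :=
  ∀ x y : Euc N, ‖x‖ = ‖y‖ → u x = u y

/-- the critical Hardy–Sobolev exponent `p*(s) = p(N-s)/(N-p)`. -/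
def pstar (N : ℕ) (p s : ℝ) : ℝ := p * ((N : ℝ) - s) / ((N : ℝ) - p)

/-- the exponent `β(s) = ((N-1)p - (p-1)s)/(N-p)`. -/
def beta (N : ℕ) (p s : ℝ) : ℝ := (((N : ℝ) - 1) * p - (p - 1) * s) / ((N : ℝ) - p)

/-- the potential `V_a(x) = |x|^{-s} (1 - a (|x|/R)^{(N-p)/(p-1)})^{-β(s)}`. -/
def Va (N : ℕ) (p s R a : ℝ) (x : Euc N) : ℝ :=
  ‖x‖ ^ (-s) * (1 - a * (‖x‖ / R) ^ (((N : ℝ) - p) / (p - 1))) ^ (-(beta N p s))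

/-- the gradient energy `∫_{B_R} |∇u|^p`. -/
def gradEn (N : ℕ) (p R : ℝ) (u : Euc N → ℝ) : ℝ :=
  ∫ x in ball (0 : Euc N) R, ‖fderiv ℝ u x‖ ^ p

/-- the denominator `(∫_{B_R} |u|^{p*(s)} V_a)^{p/p*(s)}`. -/
def denomV (N : ℕ) (p s R a : ℝ) (u : Euc N → ℝ) : ℝ :=
  (∫ x in ball (0 : Euc N) R, |u x| ^ pstar N p s * Va N p s R a x) ^ (p / pstar N p s)

/-- the Rayleigh-type quotient for the improved Hardy–Sobolev inequality. -/
def quotV (N : ℕ) (p s R a : ℝ) (u : Euc N → ℝ) : ℝ :=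
  gradEn N p R u / denomV N p s R a u

/-- `I_a` : the infimum of the quotient over nonzero functions of `W_0^{1,p}(B_R)`
(equivalently, by density, over nonzero test functions). -/
def Ia (N : ℕ) (p s R a : ℝ) : ℝ :=
  sInf (quotV N p s R a '' {u | IsTest N R u ∧ u ≠ 0})

/-- `I_{a,rad}` : the infimum of the quotient over nonzero radial functions. -/
def IaRad (N : ℕ) (p s R a : ℝ) : ℝ :=
  sInf (quotV N p s R a '' {u | IsTest N R u ∧ IsRadial u ∧ u ≠ 0})

/-- the best constant `C_{N,p,s}` in the classical Hardy–Sobolev inequality on `ℝ^N`. -/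
def HSC (N : ℕ) (p s : ℝ) : ℝ :=
  sInf ((fun u : Euc N → ℝ =>
      (∫ x : Euc N, ‖fderiv ℝ u x‖ ^ p) /
        (∫ x : Euc N, |u x| ^ pstar N p s * ‖x‖ ^ (-s)) ^ (p / pstar N p s)) ''
    {u : Euc N → ℝ | ContDiff ℝ (⊤ : ℕ∞) u ∧ HasCompactSupport u ∧ u ≠ 0})

/-- `u ∈ W_0^{1,p}(B_R)` with weak gradient `g` : `u` is a limit, in the `W^{1,p}` sense,
of test functions supported in `B_R`. -/
def MemW (N : ℕ) (p R : ℝ) (u : Euc N → ℝ) (g : Euc N → Euc N) : Prop :=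
  ∃ f : ℕ → Euc N → ℝ,
    (∀ n, IsTest N R (f n)) ∧
    Tendsto (fun n => ∫ x in ball (0 : Euc N) R, ‖gradient (f n) x - g x‖ ^ p)
      atTop (nhds (0 : ℝ)) ∧
    Tendsto (fun n => ∫ x in ball (0 : Euc N) R, |f n x - u x| ^ p) atTop (nhds (0 : ℝ))

/-- the quotient for a Sobolev function `u` with weak gradient `g`. -/
def quotW (N : ℕ) (p s R a : ℝ) (u : Euc N → ℝ) (g : Euc N → Euc N) : ℝ :=
  (∫ x in ball (0 : Euc N) R, ‖g x‖ ^ p) / denomV N p s R a u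

/-- a Sobolev function is nonzero if it is not a.e. zero on the ball. -/
def Nonzero (N : ℕ) (R : ℝ) (u : Euc N → ℝ) : Prop :=
  ¬ (u =ᵐ[volume.restrict (ball (0 : Euc N) R)] (fun _ => (0 : ℝ)))

/-- `I_a` is attained by some nonzero function of `W_0^{1,p}(B_R)`. -/
def Attained (N : ℕ) (p s R a : ℝ) : Prop :=
  ∃ u g, MemW N p R u g ∧ Nonzero N R u ∧ quotW N p s R a u g = Ia N p s R a

end HS

/-- the exponent `(N-p)/(p-1)`. -/
def eExp (N : ℕ) (p : ℝ) : ℝ := ((N : ℝ) - p) / (p - 1)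

/-- `T^{-(N-p)/(p-1)}`, with the convention `1/∞ = 0`. -/
def kap (N : ℕ) (p : ℝ) (T : EReal) : ℝ :=
  if T = ⊤ then 0 else T.toReal ^ (-(eExp N p))

/-- the ball `B_T` of (possibly infinite) radius `T` (`B_∞ = ℝ^N`). -/
def domT (N : ℕ) (T : EReal) : Set (HS.Euc N) := {y : HS.Euc N | (‖y‖ : EReal) < T}

/-- `a = 1 - (R/T)^{(N-p)/(p-1)}`, with `a = 1` when `T = ∞`. -/
def aOf (N : ℕ) (p R : ℝ) (T : EReal) : ℝ :=
  if T = ⊤ then 1 else 1 - (R / T.toReal) ^ (eExp N p)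

/-- the radius `t ∈ (0,T)` associated to `r ∈ (0,R)` through
`r^{-(N-p)/(p-1)} - R^{-(N-p)/(p-1)} = t^{-(N-p)/(p-1)} - T^{-(N-p)/(p-1)}`. -/
def tOf (N : ℕ) (p R : ℝ) (T : EReal) (r : ℝ) : ℝ :=
  (r ^ (-(eExp N p)) - R ^ (-(eExp N p)) + kap N p T) ^ (-(eExp N p)⁻¹)

open Classical in
/-- the function `u` on `B_R` obtained from `w` on `B_T` by `u(rω) = w(t(r)ω)`. -/
def pullback (N : ℕ) (p R : ℝ) (T : EReal) (w : HS.Euc N → ℝ) (x : HS.Euc N) : ℝ :=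
  if x ≠ 0 ∧ ‖x‖ < R then w ((tOf N p R T ‖x‖ / ‖x‖) • x) else 0


/-! ### Auxiliary lemmas for the proof of `transformation_radial` -/

set_option maxHeartbeats 1000000
set_option synthInstance.maxHeartbeats 400000

section TransfAuxSection

namespace CoV1D

/-- the transformation `ρ`. -/
def rho (e κ R r : ℝ) : ℝ := (r ^ (-e) - R ^ (-e) + κ) ^ (-e⁻¹)

variable {e κ R r t : ℝ}

lemma rpow_neg_lt_rpow_neg {x y : ℝ} (he : 0 < e) (hx : 0 < x) (hxy : x < y) :
    y ^ (-e) < x ^ (-e) := by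
  rw [Real.rpow_neg hx.le, Real.rpow_neg (hx.trans hxy).le]
  exact inv_strictAnti₀ (Real.rpow_pos_of_pos hx e) (Real.rpow_lt_rpow hx.le hxy he)

lemma lt_of_rpow_neg_lt {x y : ℝ} (he : 0 < e) (hx : 0 < x) (hy : 0 < y)
    (h : x ^ (-e) < y ^ (-e)) : y < x := by
  by_contra hc
  rcases eq_or_lt_of_le (not_lt.mp hc) with h1 | h1
  · rw [h1] at h; exact lt_irrefl _ h
  · exact absurd h (not_lt.mpr (rpow_neg_lt_rpow_neg he hx h1).le)

lemma Apos (he : 0 < e) (hκ : 0 ≤ κ) (hr : 0 < r) (hrR : r < R) :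
    0 < r ^ (-e) - R ^ (-e) + κ := by
  have := rpow_neg_lt_rpow_neg he hr hrR
  linarith

lemma rho_pos (he : 0 < e) (hκ : 0 ≤ κ) (hr : 0 < r) (hrR : r < R) :
    0 < rho e κ R r :=
  Real.rpow_pos_of_pos (Apos he hκ hr hrR) _

lemma rpow_neg_rpow_neg_inv {x : ℝ} (he : 0 < e) (hx : 0 < x) : (x ^ (-e⁻¹)) ^ (-e) = x := by
  rw [← Real.rpow_mul hx.le, show -e⁻¹ * -e = 1 by field_simp, Real.rpow_one]

lemma rpow_neg_e_rpow {x : ℝ} (he : 0 < e) (hx : 0 < x) : (x ^ (-e)) ^ (-e⁻¹) = x := by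
  rw [← Real.rpow_mul hx.le, show -e * -e⁻¹ = 1 by field_simp, Real.rpow_one]

lemma rho_rpow_neg_e (he : 0 < e) (hκ : 0 ≤ κ) (hr : 0 < r) (hrR : r < R) :
    (rho e κ R r) ^ (-e) = r ^ (-e) - R ^ (-e) + κ :=
  rpow_neg_rpow_neg_inv he (Apos he hκ hr hrR)

lemma rho_image (he : 0 < e) (hκ : 0 ≤ κ) (hR : 0 < R) :
    rho e κ R '' (Ioo 0 R) = {t : ℝ | 0 < t ∧ κ < t ^ (-e)} := by
  ext t
  constructor
  · rintro ⟨r, ⟨hr, hrR⟩, rfl⟩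
    refine ⟨rho_pos he hκ hr hrR, ?_⟩
    rw [rho_rpow_neg_e he hκ hr hrR]
    have := rpow_neg_lt_rpow_neg he hr hrR
    linarith
  · rintro ⟨ht, hκt⟩
    have hB : 0 < t ^ (-e) - κ + R ^ (-e) :=
      add_pos (by linarith) (Real.rpow_pos_of_pos hR _)
    set r : ℝ := (t ^ (-e) - κ + R ^ (-e)) ^ (-e⁻¹) with hrdef
    have hr : 0 < r := Real.rpow_pos_of_pos hB _
    have hre : r ^ (-e) = t ^ (-e) - κ + R ^ (-e) := rpow_neg_rpow_neg_inv he hB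
    have hrR : r < R := by
      apply lt_of_rpow_neg_lt he hR hr
      rw [hre]; linarith
    refine ⟨r, ⟨hr, hrR⟩, ?_⟩
    rw [rho, hre]
    have h4 : t ^ (-e) - κ + R ^ (-e) - R ^ (-e) + κ = t ^ (-e) := by ring
    rw [h4, rpow_neg_e_rpow he ht]

lemma rho_injOn (he : 0 < e) (hκ : 0 ≤ κ) : InjOn (rho e κ R) (Ioo 0 R) := by
  rintro a ⟨ha, haR⟩ b ⟨hb, hbR⟩ hab
  have h1 : (rho e κ R a) ^ (-e) = (rho e κ R b) ^ (-e) := by rw [hab]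
  rw [rho_rpow_neg_e he hκ ha haR, rho_rpow_neg_e he hκ hb hbR] at h1
  have h2 : a ^ (-e) = b ^ (-e) := by linarith
  have h3 : (a ^ (-e)) ^ (-e⁻¹) = (b ^ (-e)) ^ (-e⁻¹) := by rw [h2]
  rw [rpow_neg_e_rpow he ha, rpow_neg_e_rpow he hb] at h3; exact h3

lemma hasDerivAt_rho (he : 0 < e) (hκ : 0 ≤ κ) (hr : 0 < r) (hrR : r < R) :
    HasDerivAt (rho e κ R) ((rho e κ R r) ^ (1 + e) * r ^ (-(1 + e))) r := by
  have hA := Apos he hκ hr hrR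
  have h1 : HasDerivAt (fun x : ℝ => x ^ (-e) - R ^ (-e) + κ) (-e * r ^ (-e - 1)) r :=
    ((Real.hasDerivAt_rpow_const (Or.inl hr.ne')).sub_const _).add_const _
  have h2 : HasDerivAt (fun y : ℝ => y ^ (-e⁻¹))
      (-e⁻¹ * (r ^ (-e) - R ^ (-e) + κ) ^ (-e⁻¹ - 1)) (r ^ (-e) - R ^ (-e) + κ) :=
    Real.hasDerivAt_rpow_const (Or.inl hA.ne')
  have h3 := h2.comp r h1
  refine h3.congr_deriv ?_
  have hrho : (rho e κ R r) ^ (1 + e)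
      = (r ^ (-e) - R ^ (-e) + κ) ^ (-e⁻¹ - 1) := by
    rw [rho, ← Real.rpow_mul hA.le]
    congr 1
    field_simp
    ring
  have hrpow : r ^ (-(1 + e)) = r ^ (-e - 1) := by congr 1; ring
  rw [hrho, hrpow]
  field_simp

/-- one-dimensional change of variables for `ρ`. -/
lemma integral_rho (he : 0 < e) (hκ : 0 ≤ κ) (hR : 0 < R) (g : ℝ → ℝ) :
    ∫ t in {t : ℝ | 0 < t ∧ κ < t ^ (-e)}, g t
      = ∫ r in Ioo 0 R, |(rho e κ R r) ^ (1 + e) * r ^ (-(1 + e))| • g (rho e κ R r) := by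
  rw [← rho_image he hκ hR]
  exact integral_image_eq_integral_abs_deriv_smul measurableSet_Ioo
    (fun x hx => (hasDerivAt_rho he hκ hx.1 hx.2).hasDerivWithinAt)
    (rho_injOn he hκ) g

end CoV1D

namespace RadialAux

variable {N : ℕ}

lemma hasFDerivAt_norm {y : EuclideanSpace ℝ (Fin N)} (hy : y ≠ 0) :
    HasFDerivAt (fun z : EuclideanSpace ℝ (Fin N) => ‖z‖) ((‖y‖⁻¹ : ℝ) • innerSL ℝ y) y := by
  have hn : (0 : ℝ) < ‖y‖ := norm_pos_iff.mpr hy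
  have h1 : HasFDerivAt (fun z : EuclideanSpace ℝ (Fin N) => ‖z‖ ^ 2) ((2 : ℕ) • innerSL ℝ y) y :=
    (hasStrictFDerivAt_norm_sq y).hasFDerivAt
  have h2 : HasDerivAt Real.sqrt (1 / (2 * Real.sqrt (‖y‖ ^ 2))) (‖y‖ ^ 2) :=
    Real.hasDerivAt_sqrt (by positivity)
  have h3 := h2.comp_hasFDerivAt y h1
  have h3' : HasFDerivAt (fun z : EuclideanSpace ℝ (Fin N) => Real.sqrt (‖z‖ ^ 2))
      ((1 / (2 * Real.sqrt (‖y‖ ^ 2))) • (2 : ℕ) • innerSL ℝ y) y := h3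
  have h4 : (fun z : EuclideanSpace ℝ (Fin N) => Real.sqrt (‖z‖ ^ 2))
      = fun z : EuclideanSpace ℝ (Fin N) => ‖z‖ := by
    funext z; rw [Real.sqrt_sq (norm_nonneg z)]
  rw [h4] at h3'
  convert h3' using 1
  rw [Real.sqrt_sq hn.le]
  ext v
  simp
  ring

lemma radial_hasFDerivAt {F : ℝ → ℝ} {F' : ℝ} {y : EuclideanSpace ℝ (Fin N)} (hy : y ≠ 0)
    (hF : HasDerivAt F F' ‖y‖) :
    HasFDerivAt (fun z : EuclideanSpace ℝ (Fin N) => F ‖z‖)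
      (F' • ((‖y‖⁻¹ : ℝ) • innerSL ℝ y)) y :=
  hF.comp_hasFDerivAt y (hasFDerivAt_norm hy)

lemma norm_radial_deriv {F' : ℝ} {y : EuclideanSpace ℝ (Fin N)} (hy : y ≠ 0) :
    ‖F' • ((‖y‖⁻¹ : ℝ) • innerSL ℝ y)‖ = |F'| := by
  have hn : (0 : ℝ) < ‖y‖ := norm_pos_iff.mpr hy
  rw [norm_smul F' (‖y‖⁻¹ • innerSL ℝ y), norm_smul (‖y‖⁻¹ : ℝ) (innerSL ℝ y),
    innerSL_apply_norm]
  simp [Real.norm_eq_abs, abs_of_nonneg (inv_nonneg.mpr hn.le), inv_mul_cancel₀ hn.ne']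

lemma norm_fderiv_radial {F : ℝ → ℝ} {F' : ℝ} {y : EuclideanSpace ℝ (Fin N)} (hy : y ≠ 0)
    (hF : HasDerivAt F F' ‖y‖) :
    ‖fderiv ℝ (fun z : EuclideanSpace ℝ (Fin N) => F ‖z‖) y‖ = |F'| := by
  rw [(radial_hasFDerivAt hy hF).fderiv]
  exact norm_radial_deriv hy

end RadialAux

namespace TransfAux

lemma alg1 {e p q t r c : ℝ} (ht : 0 < t) (hr : 0 < r) (hc : 0 ≤ c)
    (hq : (1 + e) * (p - 1) = q) :
    t ^ (1 + e) * r ^ (-(1 + e)) * (t ^ q * c ^ p)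
      = r ^ q * (c * (t ^ (1 + e) * r ^ (-(1 + e)))) ^ p := by
  have hd : (0:ℝ) < t ^ (1 + e) * r ^ (-(1 + e)) :=
    mul_pos (Real.rpow_pos_of_pos ht _) (Real.rpow_pos_of_pos hr _)
  rw [Real.mul_rpow hc hd.le,
    Real.mul_rpow (Real.rpow_pos_of_pos ht _).le (Real.rpow_pos_of_pos hr _).le,
    ← Real.rpow_mul ht.le, ← Real.rpow_mul hr.le,
    show (1 + e) * p = 1 + e + q by linear_combination hq,
    show (-(1 + e)) * p = -(1 + e + q) by linear_combination -hq]
  have h1 : (t ^ e) ≠ 0 := (Real.rpow_pos_of_pos ht e).ne'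
  have h2 : (t ^ q) ≠ 0 := (Real.rpow_pos_of_pos ht q).ne'
  have h3 : (r ^ e) ≠ 0 := (Real.rpow_pos_of_pos hr e).ne'
  have h4 : (r ^ q) ≠ 0 := (Real.rpow_pos_of_pos hr q).ne'
  simp only [Real.rpow_neg ht.le, Real.rpow_neg hr.le, Real.rpow_add ht, Real.rpow_add hr,
    Real.rpow_one]
  field_simp

lemma alg2 {e q s β t r c : ℝ} (ht : 0 < t) (hr : 0 < r)
    (hβ : e * β = q + 1 + e - s) :
    t ^ (1 + e) * r ^ (-(1 + e)) * (t ^ q * (c * t ^ (-s)))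
      = r ^ q * (c * (r ^ (-s) * (r ^ e * t ^ (-e)) ^ (-β))) := by
  rw [Real.mul_rpow (Real.rpow_pos_of_pos hr _).le (Real.rpow_pos_of_pos ht _).le,
    ← Real.rpow_mul hr.le, ← Real.rpow_mul ht.le,
    show e * -β = -(1 + e + q - s) by linear_combination -hβ,
    show (-e) * -β = 1 + e + q - s by linear_combination hβ]
  have h1 : (t ^ e) ≠ 0 := (Real.rpow_pos_of_pos ht e).ne'
  have h2 : (t ^ q) ≠ 0 := (Real.rpow_pos_of_pos ht q).ne'
  have h3 : (r ^ e) ≠ 0 := (Real.rpow_pos_of_pos hr e).ne'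
  have h4 : (r ^ q) ≠ 0 := (Real.rpow_pos_of_pos hr q).ne'
  have h5 : (t ^ s) ≠ 0 := (Real.rpow_pos_of_pos ht s).ne'
  have h6 : (r ^ s) ≠ 0 := (Real.rpow_pos_of_pos hr s).ne'
  simp only [Real.rpow_neg ht.le, Real.rpow_neg hr.le, Real.rpow_add ht, Real.rpow_add hr,
    Real.rpow_sub ht, Real.rpow_sub hr, Real.rpow_one]
  field_simp

lemma polar_transfer {N : ℕ} (hN : 2 ≤ N) {e κ R : ℝ} (he : 0 < e) (hκ : 0 ≤ κ) (hR : 0 < R)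
    (fG fH : ℝ → ℝ)
    (hfG0 : ∀ t : ℝ, 0 < t → ¬ κ < t ^ (-e) → fG t = 0)
    (hfH0 : ∀ r : ℝ, R ≤ r → fH r = 0)
    (hpt : ∀ r : ℝ, 0 < r → r < R →
      (CoV1D.rho e κ R r) ^ (1 + e) * r ^ (-(1 + e))
          * ((CoV1D.rho e κ R r) ^ (N - 1 : ℕ) * fG (CoV1D.rho e κ R r))
        = r ^ (N - 1 : ℕ) * fH r) :
    ∫ y : EuclideanSpace ℝ (Fin N), fG ‖y‖ = ∫ x : EuclideanSpace ℝ (Fin N), fH ‖x‖ := by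
  have h0N : 0 < N := by omega
  haveI : Nontrivial (EuclideanSpace ℝ (Fin N)) := by
    refine nontrivial_of_ne (EuclideanSpace.single (⟨0, h0N⟩ : Fin N) (1:ℝ)) 0 ?_
    intro h
    have h' := congrArg (fun v : EuclideanSpace ℝ (Fin N) => ‖v‖) h
    simp [EuclideanSpace.norm_single] at h'
  have hsub : {t : ℝ | 0 < t ∧ κ < t ^ (-e)} ⊆ Ioi (0:ℝ) := fun t ht => ht.1
  have hIG : ∫ t in Ioi (0:ℝ), t ^ (N - 1 : ℕ) • fG t
      = ∫ t in {t : ℝ | 0 < t ∧ κ < t ^ (-e)}, t ^ (N - 1 : ℕ) • fG t :=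
    setIntegral_eq_of_subset_of_forall_diff_eq_zero measurableSet_Ioi hsub
      (fun t ht => by rw [hfG0 t ht.1 (fun hc => ht.2 ⟨ht.1, hc⟩), smul_zero])
  have hIH : ∫ r in Ioi (0:ℝ), r ^ (N - 1 : ℕ) • fH r
      = ∫ r in Ioo (0:ℝ) R, r ^ (N - 1 : ℕ) • fH r :=
    setIntegral_eq_of_subset_of_forall_diff_eq_zero measurableSet_Ioi Ioo_subset_Ioi_self
      (fun r hr => by
        rw [hfH0 r (not_lt.mp (fun hc => hr.2 ⟨hr.1, hc⟩)), smul_zero])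
  have hinner : ∫ t in Ioi (0:ℝ), t ^ (N - 1 : ℕ) • fG t
      = ∫ r in Ioi (0:ℝ), r ^ (N - 1 : ℕ) • fH r := by
    rw [hIG, hIH, CoV1D.integral_rho he hκ hR (fun t => t ^ (N - 1 : ℕ) • fG t)]
    refine setIntegral_congr_fun measurableSet_Ioo (fun r hr => ?_)
    have hρ' : 0 < (CoV1D.rho e κ R r) ^ (1 + e) * r ^ (-(1 + e)) :=
      mul_pos (Real.rpow_pos_of_pos (CoV1D.rho_pos he hκ hr.1 hr.2) _)
        (Real.rpow_pos_of_pos hr.1 _)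
    simp only [smul_eq_mul, abs_of_pos hρ']
    have := hpt r hr.1 hr.2
    linarith [this]
  rw [MeasureTheory.integral_fun_norm_addHaar volume fG,
      MeasureTheory.integral_fun_norm_addHaar volume fH,
      finrank_euclideanSpace_fin, hinner]

end TransfAux

end TransfAuxSection

/-- transformation identities for radial functions. -/
theorem transformation_radial (N : ℕ) (p s R : ℝ) (T : EReal) (hN : 2 ≤ N) (hp : 1 < p)
    (hpN : p < (N : ℝ)) (hs : 0 ≤ s) (hsp : s ≤ p) (hR : 0 < R) (hRT : (R : EReal) ≤ T)
    (w : HS.Euc N → ℝ) (hw1 : ContDiff ℝ 1 w) (hw2 : HasCompactSupport w)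
    (hw3 : tsupport w ⊆ domT N T) (hwrad : HS.IsRadial w) :
    (∫ y in domT N T, ‖fderiv ℝ w y‖ ^ p) =
        (∫ x in ball (0 : HS.Euc N) R, ‖fderiv ℝ (pullback N p R T w) x‖ ^ p) ∧
      (∫ y in domT N T, |w y| ^ HS.pstar N p s * ‖y‖ ^ (-s)) =
        ∫ x in ball (0 : HS.Euc N) R,
          |pullback N p R T w x| ^ HS.pstar N p s *
            (‖x‖ ^ (-s) *
              (1 - aOf N p R T * (‖x‖ / R) ^ (eExp N p)) ^ (-(HS.beta N p s))) := by
  classical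
  have hNR : (2:ℝ) ≤ (N:ℝ) := by exact_mod_cast hN
  have hp0 : (0:ℝ) < p := by linarith
  have hp1 : (0:ℝ) < p - 1 := by linarith
  have hNp : (0:ℝ) < (N:ℝ) - p := by linarith
  have h0N : 0 < N := by omega
  set e : ℝ := eExp N p with he_def
  have he : 0 < e := div_pos hNp hp1
  set κ : ℝ := kap N p T with hκ_def
  -- facts about T
  have hTbot : T ≠ ⊥ := ((EReal.bot_lt_coe R).trans_le hRT).ne'
  have hTR : T ≠ ⊤ → 0 < T.toReal ∧ R ≤ T.toReal := by
    intro hT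
    have h1 : ((T.toReal : ℝ) : EReal) = T := EReal.coe_toReal hT hTbot
    rw [← h1] at hRT
    have h2 : R ≤ T.toReal := by exact_mod_cast hRT
    exact ⟨lt_of_lt_of_le hR h2, h2⟩
  have hκ0 : 0 ≤ κ := by
    rw [hκ_def, kap]
    split_ifs with hT
    · exact le_refl 0
    · exact Real.rpow_nonneg (hTR hT).1.le _
  have hκval : ∀ _ : T ≠ ⊤, κ = T.toReal ^ (-e) := by
    intro hT; rw [hκ_def, kap, if_neg hT]
  have hκtop : T = ⊤ → κ = 0 := fun hT => by rw [hκ_def, kap, if_pos hT]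
  -- membership characterization
  have hmem : ∀ t : ℝ, 0 < t → (((t : ℝ) : EReal) < T ↔ κ < t ^ (-e)) := by
    intro t ht
    by_cases hT : T = ⊤
    · rw [hκtop hT, hT]
      simp [EReal.coe_lt_top, Real.rpow_pos_of_pos ht]
    · obtain ⟨hT0, hTRle⟩ := hTR hT
      rw [hκval hT, ← EReal.coe_toReal hT hTbot, EReal.coe_lt_coe_iff]
      constructor
      · exact fun h => CoV1D.rpow_neg_lt_rpow_neg he ht h
      · exact fun h => CoV1D.lt_of_rpow_neg_lt he hT0 ht h
  -- basis vector
  set e₀ : HS.Euc N := EuclideanSpace.single (⟨0, h0N⟩ : Fin N) (1:ℝ) with he₀def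
  have he₀ : ‖e₀‖ = 1 := by rw [he₀def, EuclideanSpace.norm_single]; norm_num
  have hsm : ∀ t : ℝ, 0 ≤ t → ‖t • e₀‖ = t := fun t ht => by
    rw [norm_smul, he₀, Real.norm_eq_abs, abs_of_nonneg ht, mul_one]
  have he₀ne : ∀ t : ℝ, 0 < t → t • e₀ ≠ 0 := by
    intro t ht h
    have h2 := hsm t ht.le
    rw [h, norm_zero] at h2
    linarith
  -- the radial profile W and its derivative W'
  set W : ℝ → ℝ := fun t => w (t • e₀) with hWdef
  have hwW : ∀ y : HS.Euc N, w y = W ‖y‖ := fun y =>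
    hwrad y (‖y‖ • e₀) (by rw [hsm _ (norm_nonneg y)])
  set W' : ℝ → ℝ := fun t => fderiv ℝ w (t • e₀) e₀ with hW'def
  have hW : ∀ t : ℝ, HasDerivAt W (W' t) t := by
    intro t
    have h1 : HasDerivAt (fun u : ℝ => u • e₀) e₀ t := by
      simpa using (hasDerivAt_id t).smul_const e₀
    exact ((hw1.differentiable one_ne_zero) (t • e₀)).hasFDerivAt.comp_hasDerivAt t h1
  have hwf : ∀ y : HS.Euc N, y ≠ 0 → ‖fderiv ℝ w y‖ = |W' ‖y‖| := by
    intro y hy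
    have hrw : w = fun z : HS.Euc N => W ‖z‖ := funext hwW
    rw [hrw]
    exact RadialAux.norm_fderiv_radial hy (hW ‖y‖)
  -- the change of variables ρ
  set ρ : ℝ → ℝ := CoV1D.rho e κ R with hρdef
  have hρ_eq : ∀ r : ℝ, tOf N p R T r = ρ r := fun r => rfl
  have hρd : ∀ {r : ℝ}, 0 < r → r < R →
      HasDerivAt ρ (ρ r ^ (1 + e) * r ^ (-(1 + e))) r :=
    fun hr hrR => CoV1D.hasDerivAt_rho he hκ0 hr hrR
  have hρpos : ∀ {r : ℝ}, 0 < r → r < R → 0 < ρ r :=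
    fun hr hrR => CoV1D.rho_pos he hκ0 hr hrR
  -- pullback representation
  have hU_eq : ∀ x : HS.Euc N, x ≠ 0 → ‖x‖ < R → pullback N p R T w x = W (ρ ‖x‖) := by
    intro x hx hxR
    have hxn : 0 < ‖x‖ := norm_pos_iff.mpr hx
    rw [pullback, if_pos (show x ≠ 0 ∧ ‖x‖ < R from ⟨hx, hxR⟩), hwW]
    congr 1
    rw [hρ_eq, norm_smul, Real.norm_eq_abs,
      abs_of_nonneg (div_nonneg (hρpos hxn hxR).le hxn.le), div_mul_cancel₀ _ hxn.ne']
  have hO : IsOpen {z : HS.Euc N | z ≠ 0 ∧ ‖z‖ < R} := by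
    have hOeq : {z : HS.Euc N | z ≠ 0 ∧ ‖z‖ < R} = ball (0:HS.Euc N) R ∩ {(0:HS.Euc N)}ᶜ := by
      ext z; simp [mem_ball_zero_iff, and_comm]
    rw [hOeq]; exact isOpen_ball.inter isOpen_compl_singleton
  have hUf : ∀ x : HS.Euc N, x ≠ 0 → ‖x‖ < R →
      ‖fderiv ℝ (pullback N p R T w) x‖
        = |W' (ρ ‖x‖) * (ρ ‖x‖ ^ (1 + e) * ‖x‖ ^ (-(1 + e)))| := by
    intro x hx hxR
    have hxn : 0 < ‖x‖ := norm_pos_iff.mpr hx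
    have hloc : pullback N p R T w =ᶠ[nhds x] fun z : HS.Euc N => W (ρ ‖z‖) := by
      filter_upwards [hO.mem_nhds ⟨hx, hxR⟩] with z hz
      exact hU_eq z hz.1 hz.2
    rw [hloc.fderiv_eq]
    have hcomp : HasDerivAt (fun rr : ℝ => W (ρ rr))
        (W' (ρ ‖x‖) * (ρ ‖x‖ ^ (1 + e) * ‖x‖ ^ (-(1 + e)))) ‖x‖ :=
      (hW (ρ ‖x‖)).comp ‖x‖ (hρd hxn hxR)
    exact RadialAux.norm_fderiv_radial hx hcomp
  -- vanishing outside the domain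
  have hw0 : ∀ y : HS.Euc N, ¬ ((‖y‖ : EReal) < T) → w y = 0 := fun y hy =>
    image_eq_zero_of_notMem_tsupport (fun hm => hy (hw3 hm))
  have hdw0 : ∀ y : HS.Euc N, ¬ ((‖y‖ : EReal) < T) → fderiv ℝ w y = 0 := by
    intro y hy
    by_contra h
    exact hy (hw3 (support_fderiv_subset ℝ h))
  have hps : 0 < HS.pstar N p s := div_pos (mul_pos hp0 (by linarith)) hNp
  have hq : (1 + e) * (p - 1) = (N:ℝ) - 1 := by
    rw [he_def]; simp only [eExp]; field_simp; ring
  have hβ : e * HS.beta N p s = ((N:ℝ) - 1) + 1 + e - s := by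
    rw [he_def]; simp only [eExp, HS.beta]; field_simp; ring
  have hcast : ∀ x : ℝ, 0 < x → x ^ (N - 1 : ℕ) = x ^ ((N:ℝ) - 1) := by
    intro x hx
    rw [← Real.rpow_natCast x (N - 1)]
    congr 1
    rw [Nat.cast_sub (by omega), Nat.cast_one]
  constructor
  · -- (1) the gradient identity
    set fG : ℝ → ℝ := fun t => ‖fderiv ℝ w (t • e₀)‖ ^ p with hfGdef
    set fH : ℝ → ℝ :=
      fun r => if r < R then ‖fderiv ℝ (pullback N p R T w) (r • e₀)‖ ^ p else 0 with hfHdef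
    have hG : ∀ y : HS.Euc N, ‖fderiv ℝ w y‖ ^ p = fG ‖y‖ := by
      intro y
      rcases eq_or_ne y 0 with rfl | hy
      · simp [hfGdef]
      · have hyn : 0 < ‖y‖ := norm_pos_iff.mpr hy
        rw [hfGdef]
        simp only []
        rw [hwf y hy, hwf (‖y‖ • e₀) (he₀ne _ hyn), hsm _ hyn.le]
    have hH : ∀ x : HS.Euc N,
        (ball (0:HS.Euc N) R).indicator
            (fun x => ‖fderiv ℝ (pullback N p R T w) x‖ ^ p) x = fH ‖x‖ := by
      intro x
      by_cases hx : x ∈ ball (0:HS.Euc N) R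
      · have hxR : ‖x‖ < R := mem_ball_zero_iff.mp hx
        rw [indicator_of_mem hx, hfHdef]
        simp only [if_pos hxR]
        rcases eq_or_ne x 0 with rfl | hx0
        · simp
        · have hxn : 0 < ‖x‖ := norm_pos_iff.mpr hx0
          rw [hUf x hx0 hxR, hUf (‖x‖ • e₀) (he₀ne _ hxn) (by rw [hsm _ hxn.le]; exact hxR),
            hsm _ hxn.le]
      · rw [indicator_of_notMem hx, hfHdef]
        have hxR : ¬ ‖x‖ < R := fun hc => hx (mem_ball_zero_iff.mpr hc)
        simp [hxR]
    have hfG0 : ∀ t : ℝ, 0 < t → ¬ κ < t ^ (-e) → fG t = 0 := by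
      intro t ht hlt
      have hnm : ¬ ((‖t • e₀‖ : EReal) < T) := by
        rw [hsm t ht.le]; exact fun hc => hlt ((hmem t ht).mp hc)
      rw [hfGdef]
      simp only []
      rw [hdw0 _ hnm, norm_zero]
      exact Real.zero_rpow hp0.ne'
    have hfH0 : ∀ r : ℝ, R ≤ r → fH r = 0 := fun r hr => by
      rw [hfHdef]; exact if_neg (not_lt.mpr hr)
    have hpt : ∀ r : ℝ, 0 < r → r < R →
        ρ r ^ (1 + e) * r ^ (-(1 + e)) * (ρ r ^ (N - 1 : ℕ) * fG (ρ r))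
          = r ^ (N - 1 : ℕ) * fH r := by
      intro r hr hrR
      have htp : 0 < ρ r := hρpos hr hrR
      have hd : 0 < ρ r ^ (1 + e) * r ^ (-(1 + e)) :=
        mul_pos (Real.rpow_pos_of_pos htp _) (Real.rpow_pos_of_pos hr _)
      have hfGv : fG (ρ r) = |W' (ρ r)| ^ p := by
        rw [hfGdef]
        simp only []
        rw [hwf _ (he₀ne _ htp), hsm _ htp.le]
      have hfHv : fH r = (|W' (ρ r)| * (ρ r ^ (1 + e) * r ^ (-(1 + e)))) ^ p := by
        rw [hfHdef]
        simp only [if_pos hrR]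
        rw [hUf (r • e₀) (he₀ne _ hr) (by rw [hsm _ hr.le]; exact hrR), hsm _ hr.le,
          abs_mul, abs_of_pos hd]
      rw [hfGv, hfHv, hcast _ htp, hcast _ hr]
      exact TransfAux.alg1 htp hr (abs_nonneg _) hq
    rw [setIntegral_eq_integral_of_forall_compl_eq_zero
        (fun y (hy : y ∉ domT N T) => by
          rw [hdw0 y hy, norm_zero]; exact Real.zero_rpow hp0.ne'),
      ← integral_indicator measurableSet_ball,
      show (fun y : HS.Euc N => ‖fderiv ℝ w y‖ ^ p) = fun y : HS.Euc N => fG ‖y‖ from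
        funext hG,
      show ((ball (0:HS.Euc N) R).indicator
          (fun x => ‖fderiv ℝ (pullback N p R T w) x‖ ^ p))
        = fun x : HS.Euc N => fH ‖x‖ from funext hH]
    exact TransfAux.polar_transfer hN he hκ0 hR fG fH hfG0 hfH0 hpt
  · -- (2) the Hardy–Sobolev term identity
    set fG : ℝ → ℝ := fun t => |w (t • e₀)| ^ HS.pstar N p s * t ^ (-s) with hfGdef
    set fH : ℝ → ℝ := fun r =>
      if r < R then
        |pullback N p R T w (r • e₀)| ^ HS.pstar N p s *
          (r ^ (-s) * (1 - aOf N p R T * (r / R) ^ e) ^ (-(HS.beta N p s)))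
      else 0 with hfHdef
    have hG : ∀ y : HS.Euc N, |w y| ^ HS.pstar N p s * ‖y‖ ^ (-s) = fG ‖y‖ := by
      intro y
      rw [hfGdef]
      simp only []
      rw [hwW y]
    have hH : ∀ x : HS.Euc N,
        (ball (0:HS.Euc N) R).indicator
            (fun x => |pullback N p R T w x| ^ HS.pstar N p s *
              (‖x‖ ^ (-s) *
                (1 - aOf N p R T * (‖x‖ / R) ^ e) ^ (-(HS.beta N p s)))) x = fH ‖x‖ := by
      intro x
      by_cases hx : x ∈ ball (0:HS.Euc N) R
      · have hxR : ‖x‖ < R := mem_ball_zero_iff.mp hx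
        rw [indicator_of_mem hx, hfHdef]
        simp only [if_pos hxR]
        rcases eq_or_ne x 0 with rfl | hx0
        · simp
        · have hxn : 0 < ‖x‖ := norm_pos_iff.mpr hx0
          rw [hU_eq x hx0 hxR, hU_eq (‖x‖ • e₀) (he₀ne _ hxn) (by rw [hsm _ hxn.le]; exact hxR),
            hsm _ hxn.le]
      · rw [indicator_of_notMem hx, hfHdef]
        have hxR : ¬ ‖x‖ < R := fun hc => hx (mem_ball_zero_iff.mpr hc)
        simp [hxR]
    have hfG0 : ∀ t : ℝ, 0 < t → ¬ κ < t ^ (-e) → fG t = 0 := by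
      intro t ht hlt
      have hnm : ¬ ((‖t • e₀‖ : EReal) < T) := by
        rw [hsm t ht.le]; exact fun hc => hlt ((hmem t ht).mp hc)
      rw [hfGdef]
      simp only []
      rw [hw0 _ hnm, abs_zero, Real.zero_rpow hps.ne', zero_mul]
    have hfH0 : ∀ r : ℝ, R ≤ r → fH r = 0 := fun r hr => by
      rw [hfHdef]; exact if_neg (not_lt.mpr hr)
    have hweight : ∀ r : ℝ, 0 < r → r < R →
        1 - aOf N p R T * (r / R) ^ e = r ^ e * (ρ r) ^ (-e) := by
      intro r hr hrR
      have hrr : (ρ r) ^ (-e) = r ^ (-e) - R ^ (-e) + κ := CoV1D.rho_rpow_neg_e he hκ0 hr hrR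
      have hRe : (r / R) ^ e = r ^ e * R ^ (-e) := by
        rw [Real.div_rpow hr.le hR.le, Real.rpow_neg hR.le, div_eq_mul_inv]
      have hre : r ^ e * r ^ (-e) = 1 := by
        rw [← Real.rpow_add hr]; simp
      rw [hrr, aOf]
      split_ifs with hT
      · rw [hκtop hT, hRe]
        linear_combination -hre
      · have hT0 := (hTR hT).1
        rw [hκval hT, ← he_def, hRe]
        have hTe : (R / T.toReal) ^ e = R ^ e * T.toReal ^ (-e) := by
          rw [Real.div_rpow hR.le hT0.le, Real.rpow_neg hT0.le, div_eq_mul_inv]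
        have hRe2 : R ^ e * R ^ (-e) = 1 := by
          rw [← Real.rpow_add hR]; simp
        rw [hTe]
        linear_combination (-(1:ℝ)) * hre + (r ^ e * T.toReal ^ (-e)) * hRe2
    have hpt : ∀ r : ℝ, 0 < r → r < R →
        ρ r ^ (1 + e) * r ^ (-(1 + e)) * (ρ r ^ (N - 1 : ℕ) * fG (ρ r))
          = r ^ (N - 1 : ℕ) * fH r := by
      intro r hr hrR
      have htp : 0 < ρ r := hρpos hr hrR
      have hfGv : fG (ρ r) = |W (ρ r)| ^ HS.pstar N p s * (ρ r) ^ (-s) := by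
        rw [hfGdef]
      have hfHv : fH r = |W (ρ r)| ^ HS.pstar N p s *
          (r ^ (-s) * (r ^ e * (ρ r) ^ (-e)) ^ (-(HS.beta N p s))) := by
        rw [hfHdef]
        simp only [if_pos hrR]
        rw [hU_eq (r • e₀) (he₀ne _ hr) (by rw [hsm _ hr.le]; exact hrR), hsm _ hr.le,
          hweight r hr hrR]
      rw [hfGv, hfHv, hcast _ htp, hcast _ hr]
      exact TransfAux.alg2 htp hr hβ
    rw [setIntegral_eq_integral_of_forall_compl_eq_zero
        (fun y (hy : y ∉ domT N T) => by
          rw [hw0 y hy, abs_zero, Real.zero_rpow hps.ne', zero_mul]),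
      ← integral_indicator measurableSet_ball,
      show (fun y : HS.Euc N => |w y| ^ HS.pstar N p s * ‖y‖ ^ (-s))
        = fun y : HS.Euc N => fG ‖y‖ from funext hG,
      show ((ball (0:HS.Euc N) R).indicator
          (fun x => |pullback N p R T w x| ^ HS.pstar N p s *
            (‖x‖ ^ (-s) *
              (1 - aOf N p R T * (‖x‖ / R) ^ e) ^ (-(HS.beta N p s)))))
        = fun x : HS.Euc N => fH ‖x‖ from funext hH]
    exact TransfAux.polar_transfer hN he hκ0 hR fG fH hfG0 hfH0 hpt
end
end

section
/- Non-radial transformation identity for the gradient: Let N ≥ 2, 1 < p < N, 0 < R ≤ T ≤ ∞ (with 1/∞ = 0), and a = 1 − (R/T)^{(N−p)/(p−1)}. Let w ∈ C_c^1(B_T) and define u on B_R by u(rω) = w(tω) for ω ∈ S^{N−1}, where r ∈ (0,R) and t ∈ (0,T) are related by r^{−(N−p)/(p−1)} − R^{−(N−p)/(p−1)} = t^{−(N−p)/(p−1)} − T^{−(N−p)/(p−1)}. Then ∫_{B_T}|∇w(y)|^p dy = ∫_{B_R}|L_p u(x)|^p dx, where in polar coordinates x = rω, L_p u = (∂u/∂r)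 ω + (1/r) (∇_{S^{N−1}} u) [1 − a(r/R)^{(N−p)/(p−1)}]^{−1}, with ∇_{S^{N−1}} u the spherical (angular) gradient. -/
open MeasureTheory Metric Set Filter

noncomputable section

/-- the differential operator
`L_p u = (∂u/∂r)ω + (1/r)(∇_{S^{N-1}}u)[1 - a(r/R)^{(N-p)/(p-1)}]⁻¹`, written using the
decomposition of the full gradient into its radial part and its angular part. -/
def LpOp (N : ℕ) (p R a : ℝ) (u : HS.Euc N → ℝ) (x : HS.Euc N) : HS.Euc N :=
  (fderiv ℝ u x (‖x‖⁻¹ • x)) • (‖x‖⁻¹ • x) +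
    (1 - a * (‖x‖ / R) ^ (eExp N p))⁻¹ •
      (gradient u x - (fderiv ℝ u x (‖x‖⁻¹ • x)) • (‖x‖⁻¹ • x))

namespace TG

open Real


open Real

variable {N : ℕ} {p R : ℝ} {T : EReal}

lemma e_pos (hp : 1 < p) (hpN : p < (N:ℝ)) : 0 < eExp N p :=
  div_pos (by linarith) (by linarith)

lemma T_ne_bot (hRT : (R : EReal) ≤ T) : T ≠ ⊥ := by
  intro h
  rw [h, le_bot_iff] at hRT
  exact EReal.coe_ne_bot R hRT

lemma le_toReal (hRT : (R : EReal) ≤ T) (hT : T ≠ ⊤) : R ≤ T.toReal := by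
  have hb := T_ne_bot hRT
  rw [← EReal.coe_toReal hT hb, EReal.coe_le_coe_iff] at hRT
  exact hRT

lemma kap_nonneg (hR : 0 < R) (hRT : (R : EReal) ≤ T) : 0 ≤ kap N p T := by
  unfold kap
  split
  · exact le_refl _
  · exact Real.rpow_nonneg (le_trans hR.le (le_toReal hRT (by assumption))) _

lemma kap_le (hp : 1 < p) (hpN : p < (N:ℝ)) (hR : 0 < R) (hRT : (R : EReal) ≤ T) :
    kap N p T ≤ R ^ (-(eExp N p)) := by
  unfold kap
  split
  · exact Real.rpow_nonneg hR.le _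
  · exact Real.rpow_le_rpow_of_nonpos hR (le_toReal hRT (by assumption))
      (neg_nonpos.2 (e_pos hp hpN).le)

lemma Q_pos (hp : 1 < p) (hpN : p < (N:ℝ)) (hR : 0 < R) (hRT : (R : EReal) ≤ T)
    {r : ℝ} (hr : 0 < r) (hrR : r < R) :
    0 < r ^ (-(eExp N p)) - R ^ (-(eExp N p)) + kap N p T := by
  have h1 : R ^ (-(eExp N p)) < r ^ (-(eExp N p)) :=
    Real.rpow_lt_rpow_of_neg hr hrR (neg_lt_zero.mpr (e_pos hp hpN))
  have h2 := kap_nonneg (N := N) (p := p) hR hRT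
  linarith

lemma tOf_pos (hp : 1 < p) (hpN : p < (N:ℝ)) (hR : 0 < R) (hRT : (R : EReal) ≤ T)
    {r : ℝ} (hr : 0 < r) (hrR : r < R) : 0 < tOf N p R T r :=
  Real.rpow_pos_of_pos (Q_pos hp hpN hR hRT hr hrR) _

lemma tOf_rpow (hp : 1 < p) (hpN : p < (N:ℝ)) (hR : 0 < R) (hRT : (R : EReal) ≤ T)
    {r : ℝ} (hr : 0 < r) (hrR : r < R) :
    (tOf N p R T r) ^ (-(eExp N p)) =
      r ^ (-(eExp N p)) - R ^ (-(eExp N p)) + kap N p T := by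
  have hQ := Q_pos hp hpN hR hRT hr hrR
  have he := (e_pos hp hpN).ne'
  rw [tOf, ← Real.rpow_mul hQ.le]
  rw [show -(eExp N p)⁻¹ * -(eExp N p) = 1 by field_simp]
  exact Real.rpow_one _

lemma rpow_neg_inj (he : eExp N p ≠ 0) {a b : ℝ} (ha : 0 < a) (hb : 0 < b)
    (h : a ^ (-(eExp N p)) = b ^ (-(eExp N p))) : a = b := by
  have := congrArg (fun z => z ^ (-(eExp N p)⁻¹)) h
  simpa [← Real.rpow_mul ha.le, ← Real.rpow_mul hb.le,
    show -(eExp N p) * -(eExp N p)⁻¹ = 1 by field_simp] using this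

lemma tOf_inj (hp : 1 < p) (hpN : p < (N:ℝ)) (hR : 0 < R) (hRT : (R : EReal) ≤ T)
    {r₁ r₂ : ℝ} (h1 : 0 < r₁) (h1R : r₁ < R) (h2 : 0 < r₂) (h2R : r₂ < R)
    (h : tOf N p R T r₁ = tOf N p R T r₂) : r₁ = r₂ := by
  have e1 := tOf_rpow hp hpN hR hRT h1 h1R
  have e2 := tOf_rpow hp hpN hR hRT h2 h2R
  rw [h, e2] at e1
  have : r₁ ^ (-(eExp N p)) = r₂ ^ (-(eExp N p)) := by linarith
  exact rpow_neg_inj (e_pos hp hpN).ne' h1 h2 this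

lemma exists_r (hp : 1 < p) (hpN : p < (N:ℝ)) (hR : 0 < R) (hRT : (R : EReal) ≤ T)
    {t : ℝ} (ht : 0 < t) (htT : (t : EReal) < T) :
    ∃ r, 0 < r ∧ r < R ∧ tOf N p R T r = t := by
  have he := e_pos hp hpN
  have hκ : kap N p T < t ^ (-(eExp N p)) := by
    unfold kap
    split
    · exact Real.rpow_pos_of_pos ht _
    · rename_i hT
      have hb := T_ne_bot hRT
      rw [← EReal.coe_toReal hT hb, EReal.coe_lt_coe_iff] at htT
      exact Real.rpow_lt_rpow_of_neg ht htT (neg_lt_zero.mpr he)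
  set B := t ^ (-(eExp N p)) - kap N p T + R ^ (-(eExp N p)) with hB
  have hBpos : 0 < B := by
    have := Real.rpow_pos_of_pos hR (-(eExp N p))
    rw [hB]; linarith
  refine ⟨B ^ (-(eExp N p)⁻¹), Real.rpow_pos_of_pos hBpos _, ?_, ?_⟩
  · have hre : (B ^ (-(eExp N p)⁻¹)) ^ (-(eExp N p)) = B := by
      rw [← Real.rpow_mul hBpos.le,
        show -(eExp N p)⁻¹ * -(eExp N p) = 1 by field_simp, Real.rpow_one]
    have hgt : R ^ (-(eExp N p)) < (B ^ (-(eExp N p)⁻¹)) ^ (-(eExp N p)) := by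
      rw [hre, hB]; linarith
    exact (Real.rpow_lt_rpow_iff_of_neg hR (Real.rpow_pos_of_pos hBpos _)
      (neg_lt_zero.mpr he)).mp hgt
  · have hre : (B ^ (-(eExp N p)⁻¹)) ^ (-(eExp N p)) = B := by
      rw [← Real.rpow_mul hBpos.le,
        show -(eExp N p)⁻¹ * -(eExp N p) = 1 by field_simp, Real.rpow_one]
    rw [tOf, hre]
    have : B - R ^ (-(eExp N p)) + kap N p T = t ^ (-(eExp N p)) := by rw [hB]; ring
    rw [this, ← Real.rpow_mul ht.le,
      show -(eExp N p) * -(eExp N p)⁻¹ = 1 by field_simp, Real.rpow_one]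

lemma hasDerivAt_tOf (hp : 1 < p) (hpN : p < (N:ℝ)) (hR : 0 < R) (hRT : (R : EReal) ≤ T)
    {r : ℝ} (hr : 0 < r) (hrR : r < R) :
    HasDerivAt (tOf N p R T) ((tOf N p R T r / r) ^ (eExp N p + 1)) r := by
  have he := e_pos hp hpN
  have hQ := Q_pos hp hpN hR hRT hr hrR
  have ht := tOf_pos hp hpN hR hRT hr hrR
  have h1 : HasDerivAt (fun s : ℝ => s ^ (-(eExp N p)) - R ^ (-(eExp N p)) + kap N p T)
      (-(eExp N p) * r ^ (-(eExp N p) - 1)) r := by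
    simpa using ((Real.hasDerivAt_rpow_const (p := -(eExp N p)) (Or.inl hr.ne')).sub_const
      (R ^ (-(eExp N p)))).add_const (kap N p T)
  have h2 := h1.rpow_const (p := -(eExp N p)⁻¹) (Or.inl hQ.ne')
  convert h2 using 1
  · rfl
  have hQe : (tOf N p R T r) ^ (eExp N p + 1) =
      (r ^ (-(eExp N p)) - R ^ (-(eExp N p)) + kap N p T) ^ (-(eExp N p)⁻¹ - 1) := by
    rw [tOf, ← Real.rpow_mul hQ.le]
    congr 1
    field_simp
    ring
  rw [Real.div_rpow ht.le hr.le, hQe,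
    show -(eExp N p) * r ^ (-(eExp N p) - 1) * -(eExp N p)⁻¹ *
        (r ^ (-(eExp N p)) - R ^ (-(eExp N p)) + kap N p T) ^ (-(eExp N p)⁻¹ - 1)
      = (eExp N p * (eExp N p)⁻¹) * (r ^ (-(eExp N p) - 1) *
        (r ^ (-(eExp N p)) - R ^ (-(eExp N p)) + kap N p T) ^ (-(eExp N p)⁻¹ - 1)) by ring,
    mul_inv_cancel₀ he.ne', one_mul,
    show -(eExp N p) - 1 = -(eExp N p + 1) by ring, Real.rpow_neg hr.le]
  rw [div_eq_mul_inv, mul_comm, Real.rpow_neg hr.le]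



open InnerProductSpace

variable {N : ℕ} {p R : ℝ} {T : EReal}

/-- the map `Φ(x) = (t(‖x‖)/‖x‖) • x`. -/
def Phi (N : ℕ) (p R : ℝ) (T : EReal) (x : HS.Euc N) : HS.Euc N :=
  (tOf N p R T ‖x‖ / ‖x‖) • x

/-- `S = B_R \ {0}`. -/
def S (N : ℕ) (R : ℝ) : Set (HS.Euc N) := Metric.ball (0 : HS.Euc N) R \ {0}

lemma mem_S {x : HS.Euc N} : x ∈ S N R ↔ 0 < ‖x‖ ∧ ‖x‖ < R := by
  simp only [S, Set.mem_diff, Metric.mem_ball, dist_zero_right, Set.mem_singleton_iff]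
  constructor
  · rintro ⟨h1, h2⟩; exact ⟨norm_pos_iff.mpr h2, h1⟩
  · rintro ⟨h1, h2⟩; exact ⟨h2, norm_pos_iff.mp h1⟩

/-- derivative of `r ↦ t(r)/r`. -/
def gder (N : ℕ) (p R : ℝ) (T : EReal) (r : ℝ) : ℝ :=
  ((tOf N p R T r / r) ^ (eExp N p + 1) * r - tOf N p R T r * 1) / r ^ 2

/-- the derivative of `Φ`. -/
def DPhi (N : ℕ) (p R : ℝ) (T : EReal) (x : HS.Euc N) : HS.Euc N →L[ℝ] HS.Euc N :=
  (tOf N p R T ‖x‖ / ‖x‖) • ContinuousLinearMap.id ℝ (HS.Euc N) +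
    (gder N p R T ‖x‖ • innerSL ℝ (‖x‖⁻¹ • x)).smulRight x

lemma hasFDerivAt_norm {x : HS.Euc N} (hx : x ≠ 0) :
    HasFDerivAt (fun y : HS.Euc N => ‖y‖) (innerSL ℝ (‖x‖⁻¹ • x)) x := by
  have h2 : HasFDerivAt (fun y : HS.Euc N => ‖y‖ ^ 2) (2 • innerSL ℝ x) x :=
    (hasStrictFDerivAt_norm_sq x).hasFDerivAt
  have hn : (0:ℝ) < ‖x‖ := norm_pos_iff.mpr hx
  have hsq : (‖x‖ ^ 2 : ℝ) ≠ 0 := pow_ne_zero _ hn.ne'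
  have h3 := (Real.hasDerivAt_sqrt hsq).comp_hasFDerivAt x h2
  have heq : ((fun s : ℝ => Real.sqrt s) ∘ fun y : HS.Euc N => ‖y‖ ^ 2) =
      fun y : HS.Euc N => ‖y‖ := by
    funext y; simp only [Function.comp_apply]; rw [Real.sqrt_sq (norm_nonneg y)]
  rw [heq] at h3
  refine h3.congr_fderiv ?_
  symm
  refine ContinuousLinearMap.ext fun v => ?_
  rw [Real.sqrt_sq (norm_nonneg x)]
  simp only [innerSL_apply_apply, ContinuousLinearMap.smul_apply, smul_eq_mul,
    ContinuousLinearMap.coe_smul', Pi.smul_apply]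
  rw [real_inner_smul_left]
  push_cast
  field_simp
  ring

lemma hasFDerivAt_Phi (hp : 1 < p) (hpN : p < (N:ℝ)) (hR : 0 < R) (hRT : (R : EReal) ≤ T)
    {x : HS.Euc N} (hx : x ∈ S N R) :
    HasFDerivAt (Phi N p R T) (DPhi N p R T x) x := by
  obtain ⟨hr, hrR⟩ := mem_S.mp hx
  have hx0 : x ≠ 0 := norm_pos_iff.mp hr
  have hnorm := hasFDerivAt_norm hx0
  have hg : HasDerivAt (fun s : ℝ => tOf N p R T s / s) (gder N p R T ‖x‖) ‖x‖ :=
    (hasDerivAt_tOf hp hpN hR hRT hr hrR).div (hasDerivAt_id _) hr.ne'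
  have hcomp : HasFDerivAt (fun y : HS.Euc N => tOf N p R T ‖y‖ / ‖y‖)
      (gder N p R T ‖x‖ • innerSL ℝ (‖x‖⁻¹ • x)) x := hg.comp_hasFDerivAt x hnorm
  exact hcomp.smul (hasFDerivAt_id x)

lemma DPhi_apply (x v : HS.Euc N) :
    DPhi N p R T x v = (tOf N p R T ‖x‖ / ‖x‖) • v +
      (gder N p R T ‖x‖ * inner (𝕜 := ℝ) (‖x‖⁻¹ • x) v) • x := by
  simp only [DPhi, ContinuousLinearMap.add_apply, ContinuousLinearMap.coe_smul',
    Pi.smul_apply, ContinuousLinearMap.coe_id', id_eq, ContinuousLinearMap.smulRight_apply,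
    ContinuousLinearMap.smul_apply, innerSL_apply_apply, smul_eq_mul]

lemma norm_omega {x : HS.Euc N} (hx : 0 < ‖x‖) : ‖(‖x‖⁻¹ • x)‖ = 1 := by
  rw [norm_smul, norm_inv, norm_norm, inv_mul_cancel₀ hx.ne']

lemma smul_omega {x : HS.Euc N} (hx : 0 < ‖x‖) : ‖x‖ • (‖x‖⁻¹ • x) = x := by
  rw [smul_smul, mul_inv_cancel₀ hx.ne', one_smul]

lemma gder_key (hp : 1 < p) (hpN : p < (N:ℝ)) (hR : 0 < R) (hRT : (R : EReal) ≤ T)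
    {r : ℝ} (hr : 0 < r) (hrR : r < R) :
    tOf N p R T r / r + gder N p R T r * r = (tOf N p R T r / r) ^ (eExp N p + 1) := by
  rw [gder]
  field_simp
  ring

lemma DPhi_omega (hp : 1 < p) (hpN : p < (N:ℝ)) (hR : 0 < R) (hRT : (R : EReal) ≤ T)
    {x : HS.Euc N} (hx : x ∈ S N R) :
    DPhi N p R T x (‖x‖⁻¹ • x) =
      ((tOf N p R T ‖x‖ / ‖x‖) ^ (eExp N p + 1)) • (‖x‖⁻¹ • x) := by
  obtain ⟨hr, hrR⟩ := mem_S.mp hx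
  rw [DPhi_apply]
  have h1 : inner (𝕜 := ℝ) (‖x‖⁻¹ • x) (‖x‖⁻¹ • x) = (1:ℝ) := by
    rw [real_inner_self_eq_norm_sq, norm_omega hr]; norm_num
  rw [h1, mul_one]
  have hinv : ‖x‖ * ‖x‖⁻¹ = 1 := mul_inv_cancel₀ hr.ne'
  have hkey := gder_key hp hpN hR hRT hr hrR
  match_scalars
  linear_combination ‖x‖⁻¹ * hkey - gder N p R T ‖x‖ * hinv

lemma DPhi_perp {x v : HS.Euc N} (hx : 0 < ‖x‖)
    (hv : inner (𝕜 := ℝ) (‖x‖⁻¹ • x) v = (0:ℝ)) :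
    DPhi N p R T x v = (tOf N p R T ‖x‖ / ‖x‖) • v := by
  rw [DPhi_apply, hv, mul_zero, zero_smul, add_zero]

lemma det_eig (hN : 2 ≤ N) {c d : ℝ} {ω : HS.Euc N} (hω : ‖ω‖ = 1)
    (A : HS.Euc N →L[ℝ] HS.Euc N) (hA0 : A ω = d • ω)
    (hAperp : ∀ v, inner (𝕜 := ℝ) ω v = (0:ℝ) → A v = c • v) :
    A.det = d * c ^ (N - 1) := by
  haveI : NeZero N := ⟨by omega⟩
  have hcard : Module.finrank ℝ (HS.Euc N) = Fintype.card (Fin N) := by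
    simp [finrank_euclideanSpace_fin]
  have horth : Orthonormal ℝ (({0} : Set (Fin N)).restrict (fun _ : Fin N => ω)) := by
    rw [orthonormal_iff_ite]
    rintro ⟨i, hi⟩ ⟨j, hj⟩
    have : i = j := by
      simp only [Set.mem_singleton_iff] at hi hj; rw [hi, hj]
    subst this
    simp only [Set.restrict_apply, if_pos rfl]
    rw [real_inner_self_eq_norm_sq]; show ‖ω‖ ^ 2 = _; rw [hω]; norm_num
  obtain ⟨b, hb⟩ := horth.exists_orthonormalBasis_extension_of_card_eq hcard
  have hb0 : b 0 = ω := hb 0 rfl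
  have hmat : LinearMap.toMatrix b.toBasis b.toBasis (A : HS.Euc N →ₗ[ℝ] HS.Euc N) =
      Matrix.diagonal (fun i => if i = 0 then d else c) := by
    ext i j
    rw [LinearMap.toMatrix_apply]
    by_cases hj : j = 0
    · subst hj
      rw [OrthonormalBasis.coe_toBasis, ContinuousLinearMap.coe_coe, hb0, hA0, ← hb0,
        _root_.map_smul, Finsupp.smul_apply, OrthonormalBasis.coe_toBasis_repr_apply,
        OrthonormalBasis.repr_self]
      by_cases hi : i = 0 <;>
        simp [Matrix.diagonal_apply, EuclideanSpace.single_apply, hi, eq_comm]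
    · have hperp : inner (𝕜 := ℝ) ω (b j) = (0:ℝ) := by
        rw [← hb0]
        exact b.orthonormal.2 (Ne.symm hj)
      rw [OrthonormalBasis.coe_toBasis, ContinuousLinearMap.coe_coe, hAperp _ hperp,
        _root_.map_smul, Finsupp.smul_apply, OrthonormalBasis.coe_toBasis_repr_apply,
        OrthonormalBasis.repr_self]
      by_cases hij : i = j <;>
        simp [Matrix.diagonal_apply, EuclideanSpace.single_apply, hij, hj, eq_comm]
  have hdet : A.det = d * ∏ _i ∈ Finset.univ.erase (0 : Fin N), c := by
    rw [show A.det = LinearMap.det (A : HS.Euc N →ₗ[ℝ] HS.Euc N) from rfl,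
      ← LinearMap.det_toMatrix b.toBasis, hmat, Matrix.det_diagonal,
      ← Finset.mul_prod_erase Finset.univ _ (Finset.mem_univ (0 : Fin N)), if_pos rfl]
    congr 1
    exact Finset.prod_congr rfl (fun i hi => if_neg (Finset.ne_of_mem_erase hi))
  rw [hdet, Finset.prod_const, Finset.card_erase_of_mem (Finset.mem_univ 0), Finset.card_univ,
    Fintype.card_fin]

lemma one_sub_a (hp : 1 < p) (hpN : p < (N:ℝ)) (hR : 0 < R) (hRT : (R : EReal) ≤ T)
    {r : ℝ} (hr : 0 < r) (hrR : r < R) :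
    1 - aOf N p R T * (r / R) ^ (eExp N p) = (r / tOf N p R T r) ^ (eExp N p) := by
  have he := e_pos hp hpN
  have ht := tOf_pos hp hpN hR hRT hr hrR
  have key : (r / tOf N p R T r) ^ (eExp N p)
      = r ^ (eExp N p) * (r ^ (-(eExp N p)) - R ^ (-(eExp N p)) + kap N p T) := by
    rw [Real.div_rpow hr.le ht.le, ← tOf_rpow hp hpN hR hRT hr hrR,
      Real.rpow_neg ht.le, div_eq_mul_inv]
  rw [key]
  have hrr : r ^ (eExp N p) * r ^ (-(eExp N p)) = 1 := by
    rw [← Real.rpow_add hr]; simp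
  have hrR' : r ^ (eExp N p) * R ^ (-(eExp N p)) = (r / R) ^ (eExp N p) := by
    rw [Real.div_rpow hr.le hR.le, Real.rpow_neg hR.le, div_eq_mul_inv]
  by_cases hT : T = ⊤
  · rw [aOf, if_pos hT, kap, if_pos hT]
    rw [mul_add, mul_sub, hrr, hrR']
    ring
  · have hTr : 0 < T.toReal := lt_of_lt_of_le hR (le_toReal hRT hT)
    rw [aOf, if_neg hT, kap, if_neg hT]
    rw [mul_add, mul_sub, hrr, hrR']
    have hthis : r ^ (eExp N p) * T.toReal ^ (-(eExp N p)) = (r / T.toReal) ^ (eExp N p) := by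
      rw [Real.div_rpow hr.le hTr.le, Real.rpow_neg hTr.le, div_eq_mul_inv]
    rw [hthis]
    have hsplit : (R / T.toReal) ^ (eExp N p) * (r / R) ^ (eExp N p)
        = (r / T.toReal) ^ (eExp N p) := by
      rw [← Real.mul_rpow (by positivity) (by positivity)]
      congr 1
      field_simp
    linear_combination hsplit

lemma beta_inv (hp : 1 < p) (hpN : p < (N:ℝ)) (hR : 0 < R) (hRT : (R : EReal) ≤ T)
    {r : ℝ} (hr : 0 < r) (hrR : r < R) :
    ((r / tOf N p R T r) ^ (eExp N p))⁻¹ * (tOf N p R T r / r)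
      = (tOf N p R T r / r) ^ (eExp N p + 1) := by
  have ht := tOf_pos hp hpN hR hRT hr hrR
  rw [← Real.inv_rpow (by positivity), inv_div]
  rw [Real.rpow_add_one (by positivity : tOf N p R T r / r ≠ 0)]

lemma exp_id (hp : 1 < p) (hpN : p < (N:ℝ)) :
    (eExp N p + 1) * p = (eExp N p + 1) + ((N:ℝ) - 1) := by
  have h1 : p - 1 ≠ 0 := sub_ne_zero.mpr hp.ne'
  rw [eExp]
  field_simp
  ring

lemma gradient_eq (f : HS.Euc N → ℝ) (y v : HS.Euc N) :
    inner (𝕜 := ℝ) (gradient f y) v = fderiv ℝ f y v :=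
  InnerProductSpace.toDual_symm_apply

lemma norm_gradient_eq (f : HS.Euc N → ℝ) (y : HS.Euc N) :
    ‖gradient f y‖ = ‖fderiv ℝ f y‖ :=
  LinearIsometryEquiv.norm_map (InnerProductSpace.toDual ℝ (HS.Euc N)).symm _

lemma pointwise (hp : 1 < p) (hpN : p < (N:ℝ)) (hR : 0 < R) (hRT : (R : EReal) ≤ T)
    {w : HS.Euc N → ℝ} (hw1 : ContDiff ℝ 1 w) {x : HS.Euc N} (hx : x ∈ S N R) :
    LpOp N p R (aOf N p R T) (pullback N p R T w) x
      = ((tOf N p R T ‖x‖ / ‖x‖) ^ (eExp N p + 1)) • gradient w (Phi N p R T x) := by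
  obtain ⟨hr, hrR⟩ := mem_S.mp hx
  have ht := tOf_pos hp hpN hR hRT hr hrR
  have hΦ := hasFDerivAt_Phi hp hpN hR hRT hx
  have hwd : HasFDerivAt w (fderiv ℝ w (Phi N p R T x)) (Phi N p R T x) :=
    ((hw1.differentiable one_ne_zero) (Phi N p R T x)).hasFDerivAt
  set D := fderiv ℝ w (Phi N p R T x) with hD
  have hev : pullback N p R T w =ᶠ[nhds x] fun y => w (Phi N p R T y) := by
    have hopen : IsOpen (S N R) := isOpen_ball.sdiff isClosed_singleton
    filter_upwards [hopen.mem_nhds hx] with y hy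
    obtain ⟨hy1, hy2⟩ := mem_S.mp hy
    simp only [pullback]
    rw [if_pos (⟨norm_pos_iff.mp hy1, hy2⟩ : y ≠ 0 ∧ ‖y‖ < R)]
    rfl
  have hu : HasFDerivAt (pullback N p R T w) (D.comp (DPhi N p R T x)) x :=
    (hwd.comp x hΦ).congr_of_eventuallyEq hev
  have hfd : fderiv ℝ (pullback N p R T w) x = D.comp (DPhi N p R T x) := hu.fderiv
  set G := gradient w (Phi N p R T x) with hG
  have hDv : ∀ v, D v = inner (𝕜 := ℝ) G v := fun v => (gradient_eq w (Phi N p R T x) v).symm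
  have hDx : D x = ‖x‖ * inner (𝕜 := ℝ) G (‖x‖⁻¹ • x) := by
    nth_rewrite 1 [← smul_omega hr]
    rw [_root_.map_smul, smul_eq_mul, hDv]
  have hgradu : gradient (pullback N p R T w) x
      = (tOf N p R T ‖x‖ / ‖x‖) • G +
        ((gder N p R T ‖x‖ * ‖x‖) * inner (𝕜 := ℝ) G (‖x‖⁻¹ • x)) • (‖x‖⁻¹ • x) := by
    apply ext_inner_right ℝ
    intro v
    rw [gradient_eq, hfd, ContinuousLinearMap.comp_apply, DPhi_apply, map_add,
      _root_.map_smul, _root_.map_smul, hDx, hDv, inner_add_left, real_inner_smul_left,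
      real_inner_smul_left]
    simp only [real_inner_smul_left, smul_eq_mul]
    ring
  have homega : (D.comp (DPhi N p R T x)) (‖x‖⁻¹ • x)
      = ((tOf N p R T ‖x‖ / ‖x‖) ^ (eExp N p + 1)) * inner (𝕜 := ℝ) G (‖x‖⁻¹ • x) := by
    rw [ContinuousLinearMap.comp_apply, DPhi_omega hp hpN hR hRT hx, _root_.map_smul,
      smul_eq_mul, hDv]
  have hkey := gder_key hp hpN hR hRT hr hrR
  have hβ := beta_inv hp hpN hR hRT hr hrR
  have hgd : gder N p R T ‖x‖ * ‖x‖
      = (tOf N p R T ‖x‖ / ‖x‖) ^ (eExp N p + 1) - tOf N p R T ‖x‖ / ‖x‖ := by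
    linarith [hkey]
  simp only [LpOp]
  rw [hfd, hgradu, homega, one_sub_a hp hpN hR hRT hr hrR, hgd]
  set α := inner (𝕜 := ℝ) G (‖x‖⁻¹ • x) with hα
  set γ := ((‖x‖ / tOf N p R T ‖x‖) ^ (eExp N p))⁻¹ with hγ
  match_scalars
  · linear_combination -α * ‖x‖⁻¹ * hβ
  · linear_combination hβ

lemma pointwise_norm (hN : 2 ≤ N) (hp : 1 < p) (hpN : p < (N:ℝ)) (hR : 0 < R)
    (hRT : (R : EReal) ≤ T) {w : HS.Euc N → ℝ} (hw1 : ContDiff ℝ 1 w)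
    {x : HS.Euc N} (hx : x ∈ S N R) :
    ‖LpOp N p R (aOf N p R T) (pullback N p R T w) x‖ ^ p
      = |(DPhi N p R T x).det| * ‖fderiv ℝ w (Phi N p R T x)‖ ^ p := by
  obtain ⟨hr, hrR⟩ := mem_S.mp hx
  have ht := tOf_pos hp hpN hR hRT hr hrR
  have hgr : 0 < tOf N p R T ‖x‖ / ‖x‖ := div_pos ht hr
  have hf' : 0 < (tOf N p R T ‖x‖ / ‖x‖) ^ (eExp N p + 1) := Real.rpow_pos_of_pos hgr _
  have hdet : (DPhi N p R T x).det
      = (tOf N p R T ‖x‖ / ‖x‖) ^ (eExp N p + 1) * (tOf N p R T ‖x‖ / ‖x‖) ^ (N - 1) :=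
    det_eig hN (norm_omega hr) _ (DPhi_omega hp hpN hR hRT hx) (fun v hv => DPhi_perp hr hv)
  rw [pointwise hp hpN hR hRT hw1 hx, norm_smul, Real.norm_eq_abs, abs_of_pos hf',
    Real.mul_rpow hf'.le (norm_nonneg _), norm_gradient_eq, hdet]
  congr 1
  rw [abs_of_pos (mul_pos hf' (pow_pos hgr _))]
  rw [← Real.rpow_natCast (tOf N p R T ‖x‖ / ‖x‖) (N - 1), ← Real.rpow_mul hgr.le,
    ← Real.rpow_add hgr]
  congr 1
  have hcast : ((N - 1 : ℕ) : ℝ) = (N : ℝ) - 1 := by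
    rw [Nat.cast_sub (by omega : 1 ≤ N), Nat.cast_one]
  rw [hcast]
  exact exp_id hp hpN

lemma norm_Phi (hp : 1 < p) (hpN : p < (N:ℝ)) (hR : 0 < R) (hRT : (R : EReal) ≤ T)
    {x : HS.Euc N} (hx : x ∈ S N R) : ‖Phi N p R T x‖ = tOf N p R T ‖x‖ := by
  obtain ⟨hr, hrR⟩ := mem_S.mp hx
  have ht := tOf_pos hp hpN hR hRT hr hrR
  rw [Phi, norm_smul, Real.norm_eq_abs, abs_of_pos (div_pos ht hr), div_mul_cancel₀ _ hr.ne']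

lemma injOn_Phi (hp : 1 < p) (hpN : p < (N:ℝ)) (hR : 0 < R) (hRT : (R : EReal) ≤ T) :
    Set.InjOn (Phi N p R T) (S N R) := by
  rintro x hx y hy hxy
  obtain ⟨hrx, hrxR⟩ := mem_S.mp hx
  obtain ⟨hry, hryR⟩ := mem_S.mp hy
  have hts : tOf N p R T ‖x‖ = tOf N p R T ‖y‖ := by
    rw [← norm_Phi hp hpN hR hRT hx, hxy, norm_Phi hp hpN hR hRT hy]
  have hn : ‖x‖ = ‖y‖ := tOf_inj hp hpN hR hRT hrx hrxR hry hryR hts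
  have hc : tOf N p R T ‖x‖ / ‖x‖ ≠ 0 :=
    ne_of_gt (div_pos (tOf_pos hp hpN hR hRT hrx hrxR) hrx)
  rw [Phi, Phi, ← hn] at hxy
  exact smul_right_injective (HS.Euc N) hc hxy

lemma image_Phi (hp : 1 < p) (hpN : p < (N:ℝ)) (hR : 0 < R) (hRT : (R : EReal) ≤ T) :
    Phi N p R T '' S N R = domT N T \ {0} := by
  apply Set.Subset.antisymm
  · rintro y ⟨x, hx, rfl⟩
    obtain ⟨hr, hrR⟩ := mem_S.mp hx
    have ht := tOf_pos hp hpN hR hRT hr hrR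
    have hnorm := norm_Phi hp hpN hR hRT hx
    constructor
    · show ((‖Phi N p R T x‖ : ℝ) : EReal) < T
      rw [hnorm]
      by_cases hT : T = ⊤
      · rw [hT]; exact EReal.coe_lt_top _
      · have hb := T_ne_bot hRT
        have hTr : 0 < T.toReal := lt_of_lt_of_le hR (le_toReal hRT hT)
        have h1 : T.toReal ^ (-(eExp N p)) < (tOf N p R T ‖x‖) ^ (-(eExp N p)) := by
          rw [tOf_rpow hp hpN hR hRT hr hrR]
          have h2 : R ^ (-(eExp N p)) < ‖x‖ ^ (-(eExp N p)) :=
            Real.rpow_lt_rpow_of_neg hr hrR (neg_lt_zero.mpr (e_pos hp hpN))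
          have h3 : kap N p T = T.toReal ^ (-(eExp N p)) := by rw [kap, if_neg hT]
          linarith
        have hfin : tOf N p R T ‖x‖ < T.toReal :=
          (Real.rpow_lt_rpow_iff_of_neg hTr ht (neg_lt_zero.mpr (e_pos hp hpN))).mp h1
        have hlt := EReal.coe_lt_coe_iff.mpr hfin
        rwa [EReal.coe_toReal hT hb] at hlt
    · simp only [Set.mem_singleton_iff]
      intro h0
      rw [h0, norm_zero] at hnorm
      exact ht.ne hnorm
  · rintro y ⟨hyT, hy0⟩
    simp only [Set.mem_singleton_iff] at hy0
    have hty : 0 < ‖y‖ := norm_pos_iff.mpr hy0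
    obtain ⟨r, hrpos, hrR, hts⟩ := exists_r hp hpN hR hRT hty hyT
    have hnx : ‖(r / ‖y‖) • y‖ = r := by
      rw [norm_smul, Real.norm_eq_abs, abs_of_pos (div_pos hrpos hty),
        div_mul_cancel₀ _ hty.ne']
    refine ⟨(r / ‖y‖) • y, mem_S.mpr (by rw [hnx]; exact ⟨hrpos, hrR⟩), ?_⟩
    rw [Phi, hnx, hts, smul_smul]
    rw [show ‖y‖ / r * (r / ‖y‖) = 1 by field_simp]
    exact one_smul _ _

end TG


/-- non-radial transformation identity for the gradient. -/
theorem transformation_gradient (N : ℕ) (p R : ℝ) (T : EReal) (hN : 2 ≤ N) (hp : 1 < p)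
    (hpN : p < (N : ℝ)) (hR : 0 < R) (hRT : (R : EReal) ≤ T)
    (w : HS.Euc N → ℝ) (hw1 : ContDiff ℝ 1 w) (hw2 : HasCompactSupport w)
    (hw3 : tsupport w ⊆ domT N T) :
    (∫ y in domT N T, ‖fderiv ℝ w y‖ ^ p) =
      ∫ x in ball (0 : HS.Euc N) R,
        ‖LpOp N p R (aOf N p R T) (pullback N p R T w) x‖ ^ p := by
  have hS : MeasurableSet (TG.S N R) :=
    measurableSet_ball.diff (measurableSet_singleton 0)
  have hder : ∀ x ∈ TG.S N R,
      HasFDerivWithinAt (TG.Phi N p R T) (TG.DPhi N p R T x) (TG.S N R) x :=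
    fun x hx => (TG.hasFDerivAt_Phi hp hpN hR hRT hx).hasFDerivWithinAt
  have hinj := TG.injOn_Phi (N := N) (T := T) hp hpN hR hRT
  have hcov := MeasureTheory.integral_image_eq_integral_abs_det_fderiv_smul volume hS hder hinj
      (fun y => ‖fderiv ℝ w y‖ ^ p)
  rw [TG.image_Phi hp hpN hR hRT] at hcov
  haveI : Nontrivial (HS.Euc N) := by
    refine ⟨EuclideanSpace.single (⟨0, by omega⟩ : Fin N) (1:ℝ), 0, ?_⟩
    intro h
    have : (EuclideanSpace.single (⟨0, by omega⟩ : Fin N) (1:ℝ)) ⟨0, by omega⟩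
        = (0 : HS.Euc N) ⟨0, by omega⟩ := by rw [h]
    rw [EuclideanSpace.single_apply, if_pos rfl] at this
    simpa using this
  have h0 : volume ({0} : Set (HS.Euc N)) = 0 := measure_singleton 0
  have hae1 : (domT N T \ {0} : Set (HS.Euc N)) =ᵐ[volume] domT N T :=
    MeasureTheory.diff_ae_eq_self.mpr (measure_mono_null Set.inter_subset_right h0)
  have hae2 : (TG.S N R : Set (HS.Euc N)) =ᵐ[volume] ball (0 : HS.Euc N) R :=
    MeasureTheory.diff_ae_eq_self.mpr (measure_mono_null Set.inter_subset_right h0)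
  rw [← MeasureTheory.setIntegral_congr_set hae1, hcov,
    ← MeasureTheory.setIntegral_congr_set hae2]
  apply MeasureTheory.setIntegral_congr_fun hS
  intro x hx
  have hpt := (TG.pointwise_norm hN hp hpN hR hRT hw1 hx).symm
  simpa [smul_eq_mul] using hpt
end
end

section
/- Limit of the rescaled Sobolev constants: Let 1 < p < N be fixed. For m > N let C_{m,p,0} = π^{p/2} · m · ((m−p)/(p−1))^{p−1} · (Γ(m/p) Γ(m+1−m/p) / (Γ(m) Γ(1+m/2)))^{p/m} be the best Sobolev constant in dimension m, and let ω_{k−1} = k π^{k/2} / Γ(1+k/2) denote the surface area of the unit sphere S^{k−1} ⊂ ℝ^k. Then lim_{m→∞} C_{m,p,0} · (ω_{N−1}/ω_{m−1})^{p/m} · ((N−p)/(m−p))^{p − p/m} = ((N−p)/p)^p. -/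
open MeasureTheory Metric Set Filter

noncomputable section

section SobolevLimitAux

open Real Filter Set

lemma fact_log_bound : ∀ᶠ n : ℕ in atTop,
    |Real.log (Nat.factorial n) - ((n : ℝ) * Real.log n - n)| ≤ 2 + Real.log n := by
  have h := Stirling.tendsto_stirlingSeq_sqrt_pi
  have h1 : (1 : ℝ) < √π := by
    nlinarith [Real.sq_sqrt pi_pos.le, Real.sqrt_nonneg π, pi_gt_three]
  have h2 : √π < 2 := by
    nlinarith [Real.sq_sqrt pi_pos.le, Real.sqrt_nonneg π, pi_lt_d2]
  filter_upwards [h.eventually (eventually_gt_nhds h1),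
    h.eventually (eventually_lt_nhds h2), eventually_ge_atTop 1] with n hg hl hn1
  have hn0 : (0:ℝ) < n := by exact_mod_cast hn1
  have hform := Stirling.log_stirlingSeq_formula n
  have hne : Real.log ((n:ℝ) / Real.exp 1) = Real.log n - 1 := by
    rw [Real.log_div hn0.ne' (Real.exp_ne_zero 1), Real.log_exp]
  rw [hne] at hform
  have hlogss1 : 0 < Real.log (Stirling.stirlingSeq n) := Real.log_pos hg
  have hlogss2 : Real.log (Stirling.stirlingSeq n) < 1 := by
    have := Real.log_le_sub_one_of_pos (lt_trans one_pos hg : (0:ℝ) < Stirling.stirlingSeq n)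
    linarith
  have hlog2 : Real.log (2 * (n:ℝ)) = Real.log 2 + Real.log n := Real.log_mul two_ne_zero hn0.ne'
  have hlog2' : Real.log 2 ≤ 1 := by linarith [Real.log_le_sub_one_of_pos (by norm_num : (0:ℝ) < 2)]
  have hlogn : 0 ≤ Real.log (n:ℝ) := Real.log_nonneg (by exact_mod_cast hn1)
  have hlog2'' : 0 ≤ Real.log 2 := Real.log_nonneg one_le_two
  have key : Real.log (Nat.factorial n) - ((n : ℝ) * Real.log n - n)
      = Real.log (Stirling.stirlingSeq n) + 1/2 * Real.log (2*n) := by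
    have : Real.log (Stirling.stirlingSeq n)
        = Real.log (Nat.factorial n) - 1/2 * Real.log (2*n) - n * (Real.log n - 1) := hform
    linarith [this]
  rw [key, abs_le]
  constructor <;> linarith

lemma tlogt_mono {s t : ℝ} (hs : 1 ≤ s) (hst : s ≤ t) :
    s * Real.log s - s ≤ t * Real.log t - t := by
  have hs0 : (0:ℝ) < s := by linarith
  have ht0 : (0:ℝ) < t := by linarith
  have h1 : Real.log s - Real.log t ≤ s / t - 1 := by
    have := Real.log_le_sub_one_of_pos (div_pos hs0 ht0)
    rwa [Real.log_div hs0.ne' ht0.ne'] at this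
  have h2 : t * (s / t - 1) = s - t := by field_simp
  have h3 : 0 ≤ Real.log s := Real.log_nonneg hs
  nlinarith [mul_le_mul_of_nonneg_left h1 ht0.le, mul_nonneg (sub_nonneg.2 hst) h3]

lemma psi_bound : ∀ᶠ x : ℝ in atTop,
    |Real.log (Real.Gamma x) - (x * Real.log x - x)| ≤ 4 * Real.log x + 6 := by
  obtain ⟨n₀, hn₀⟩ := eventually_atTop.1 fact_log_bound
  filter_upwards [eventually_ge_atTop (3:ℝ), eventually_ge_atTop ((n₀:ℝ) + 4)] with x hx3 hxn₀
  have hx0 : (0:ℝ) < x := by linarith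
  set n : ℕ := ⌊x⌋₊ with hn
  have hnx : (n:ℝ) ≤ x := Nat.floor_le hx0.le
  have hxn : x < (n:ℝ) + 1 := Nat.lt_floor_add_one x
  have hn4 : n₀ + 4 ≤ n := Nat.le_floor (by push_cast; linarith)
  have hn3 : 3 ≤ n := by omega
  set k : ℕ := n - 1 with hkdef
  have hk : (k:ℝ) = (n:ℝ) - 1 := by
    have : 1 ≤ n := by omega
    rw [hkdef, Nat.cast_sub this, Nat.cast_one]
  -- factorial bounds
  have hfn := abs_le.1 (hn₀ n (by omega))
  have hfk := abs_le.1 (hn₀ k (by omega))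
  -- Gamma sandwich
  have h2n : (2:ℝ) ≤ (n:ℝ) := by exact_mod_cast by omega
  have hmono := Real.Gamma_strictMonoOn_Ici.monotoneOn
  have hup : Real.Gamma x ≤ Real.Gamma ((n:ℝ)+1) :=
    hmono (by simp [mem_Ici]; linarith) (by simp [mem_Ici]; linarith) (by linarith)
  have hlo : Real.Gamma ((n:ℝ)) ≤ Real.Gamma x :=
    hmono (by simp [mem_Ici]; linarith) (by simp [mem_Ici]; linarith) hnx
  have hgn1 : Real.Gamma ((n:ℝ)+1) = Nat.factorial n := Real.Gamma_nat_eq_factorial n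
  have hgn : Real.Gamma ((n:ℝ)) = Nat.factorial k := by
    have h' : ((k:ℝ)) + 1 = (n:ℝ) := by rw [hk]; ring
    rw [← h']; exact Real.Gamma_nat_eq_factorial k
  have hΓpos : 0 < Real.Gamma x := Real.Gamma_pos_of_pos hx0
  have hkpos : (0:ℝ) < (k:ℝ) := by rw [hk]; linarith
  have hup' : Real.log (Real.Gamma x) ≤ Real.log (Nat.factorial n) := by
    rw [← hgn1]; exact Real.log_le_log hΓpos hup
  have hlo' : Real.log (Nat.factorial k) ≤ Real.log (Real.Gamma x) := by
    rw [← hgn]; exact Real.log_le_log (Real.Gamma_pos_of_pos (by linarith)) hlo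
  -- monotonicity n log n - n ≤ x log x - x
  have hA : (n:ℝ) * Real.log n - n ≤ x * Real.log x - x :=
    tlogt_mono (by linarith) hnx
  -- hB : x log x - k log k ≤ 2 log x + 2
  have hlogx : 0 ≤ Real.log x := Real.log_nonneg (by linarith)
  have hlogk : Real.log (k:ℝ) ≤ Real.log x := Real.log_le_log hkpos (by linarith)
  have hlogk0 : 0 ≤ Real.log (k:ℝ) := Real.log_nonneg (by rw [hk]; linarith)
  have hlogn : Real.log (n:ℝ) ≤ Real.log x := Real.log_le_log (by linarith) hnx
  have hxk2 : x - (k:ℝ) ≤ 2 := by rw [hk]; linarith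
  have hxk0 : 0 ≤ x - (k:ℝ) := by rw [hk]; linarith
  have hB : x * Real.log x - (k:ℝ) * Real.log (k:ℝ) ≤ 2 * Real.log x + 2 := by
    have h1 : Real.log x - Real.log (k:ℝ) ≤ x / (k:ℝ) - 1 := by
      have := Real.log_le_sub_one_of_pos (div_pos hx0 hkpos)
      rwa [Real.log_div hx0.ne' hkpos.ne'] at this
    have h2 : (k:ℝ) * (x / (k:ℝ) - 1) = x - (k:ℝ) := by field_simp
    nlinarith [mul_le_mul_of_nonneg_left h1 hkpos.le,
      mul_le_mul_of_nonneg_right hxk2 hlogx, mul_nonneg hxk0 hlogx]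
  rw [abs_le]
  constructor
  · linarith [hfk.1, hfk.2]
  · linarith [hfn.1, hfn.2]

lemma master_tendsto : Tendsto (fun m : ℝ => (4 * Real.log (2 * m) + 6) / m) atTop (nhds 0) := by
  have h1 : Tendsto (fun m : ℝ => Real.log m / m) atTop (nhds 0) :=
    Real.isLittleO_log_id_atTop.tendsto_div_nhds_zero
  have h2 : Tendsto (fun m : ℝ => 4 * (Real.log m / m) + (4 * Real.log 2 + 6) * m⁻¹)
      atTop (nhds (4 * 0 + (4 * Real.log 2 + 6) * 0)) :=
    (h1.const_mul 4).add (tendsto_inv_atTop_zero.const_mul _)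
  rw [show (4:ℝ) * 0 + (4 * Real.log 2 + 6) * 0 = 0 by ring] at h2
  apply h2.congr'
  filter_upwards [eventually_gt_atTop (0:ℝ)] with m hm
  rw [Real.log_mul two_ne_zero hm.ne']
  field_simp
  ring

lemma psi_term (f : ℝ → ℝ) (hf : Tendsto f atTop atTop)
    (hb : ∀ᶠ m : ℝ in atTop, f m ≤ 2 * m) :
    Tendsto (fun m => (Real.log (Real.Gamma (f m)) - (f m * Real.log (f m) - f m)) / m)
      atTop (nhds 0) := by
  apply squeeze_zero_norm' _ master_tendsto
  filter_upwards [hf.eventually psi_bound, hf.eventually (eventually_ge_atTop (1:ℝ)),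
    hb, eventually_gt_atTop (0:ℝ)] with m hψ hf1 hfm hm
  have hfpos : (0:ℝ) < f m := by linarith
  have hlog : Real.log (f m) ≤ Real.log (2 * m) := Real.log_le_log hfpos hfm
  have h6 : |Real.log (Real.Gamma (f m)) - (f m * Real.log (f m) - f m)|
      ≤ 4 * Real.log (2 * m) + 6 := by linarith
  rw [Real.norm_eq_abs, abs_div, abs_of_pos hm]
  exact div_le_div_of_nonneg_right h6 hm.le

lemma key_gamma_ratio (p : ℝ) (hp : 1 < p) :
    Tendsto (fun m : ℝ =>
      (Real.log (Real.Gamma (m / p)) + Real.log (Real.Gamma (m + 1 - m / p))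
        - Real.log (Real.Gamma (m + 1))) / m) atTop
      (nhds ((1 / p) * Real.log (1 / p) + (1 - 1 / p) * Real.log (1 - 1 / p))) := by
  have hp0 : (0:ℝ) < p := by linarith
  have hq0 : (0:ℝ) < 1 - 1/p := by
    rw [sub_pos, div_lt_one hp0]; exact hp
  -- tendsto atTop of the three arguments
  have ha : Tendsto (fun m : ℝ => m / p) atTop atTop :=
    tendsto_id.atTop_div_const hp0
  have hbt : Tendsto (fun m : ℝ => m + 1 - m / p) atTop atTop := by
    apply tendsto_atTop_mono' atTop (show ∀ᶠ m : ℝ in atTop, (1 - 1/p) * m ≤ m + 1 - m / p by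
      filter_upwards with m; have : (1 - 1/p) * m = m - m/p := by ring
      linarith [this])
    exact tendsto_id.const_mul_atTop hq0
  have hct : Tendsto (fun m : ℝ => m + 1) atTop atTop :=
    tendsto_atTop_add_const_right _ 1 tendsto_id
  -- the three psi terms
  have hba : ∀ᶠ m : ℝ in atTop, m / p ≤ 2 * m := by
    filter_upwards [eventually_ge_atTop (0:ℝ)] with m hm
    rw [div_le_iff₀ hp0]
    nlinarith
  have hbb : ∀ᶠ m : ℝ in atTop, m + 1 - m / p ≤ 2 * m := by
    filter_upwards [eventually_ge_atTop (1:ℝ)] with m hm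
    have h1 : 0 ≤ m / p := by positivity
    linarith
  have hbc : ∀ᶠ m : ℝ in atTop, m + 1 ≤ 2 * m := by
    filter_upwards [eventually_ge_atTop (1:ℝ)] with m hm
    linarith
  have hψa := psi_term _ ha hba
  have hψb := psi_term _ hbt hbb
  have hψc := psi_term _ hct hbc
  -- ratio tendstos
  have hbd : Tendsto (fun m : ℝ => (m + 1 - m / p) / m) atTop (nhds (1 - 1/p)) := by
    have : Tendsto (fun m : ℝ => 1 - 1/p + m⁻¹) atTop (nhds (1 - 1/p + 0)) :=
      tendsto_const_nhds.add tendsto_inv_atTop_zero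
    rw [add_zero] at this
    apply this.congr'
    filter_upwards [eventually_gt_atTop (0:ℝ)] with m hm
    field_simp
    ring
  have hcd : Tendsto (fun m : ℝ => (m + 1) / m) atTop (nhds 1) := by
    have : Tendsto (fun m : ℝ => 1 + m⁻¹) atTop (nhds (1 + 0)) :=
      tendsto_const_nhds.add tendsto_inv_atTop_zero
    rw [add_zero] at this
    apply this.congr'
    filter_upwards [eventually_gt_atTop (0:ℝ)] with m hm
    field_simp
  -- combine
  have hG : Tendsto (fun m : ℝ =>
      (Real.log (Real.Gamma (m/p)) - ((m/p) * Real.log (m/p) - m/p)) / m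
      + (Real.log (Real.Gamma (m+1-m/p)) - ((m+1-m/p) * Real.log (m+1-m/p) - (m+1-m/p))) / m
      - (Real.log (Real.Gamma (m+1)) - ((m+1) * Real.log (m+1) - (m+1))) / m
      + (1/p) * Real.log (1/p)
      + ((m+1-m/p)/m) * Real.log ((m+1-m/p)/m)
      - ((m+1)/m) * Real.log ((m+1)/m)) atTop
      (nhds (0 + 0 - 0 + (1/p) * Real.log (1/p)
        + (1 - 1/p) * Real.log (1 - 1/p) - 1 * Real.log 1)) := by
    exact ((((hψa.add hψb).sub hψc).add tendsto_const_nhds).add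
      (hbd.mul (hbd.log hq0.ne'))).sub (hcd.mul (hcd.log one_ne_zero))
  rw [show (0:ℝ) + 0 - 0 + (1/p) * Real.log (1/p) + (1 - 1/p) * Real.log (1 - 1/p)
      - 1 * Real.log 1 = (1/p) * Real.log (1/p) + (1 - 1/p) * Real.log (1 - 1/p) by
    simp [Real.log_one]] at hG
  apply hG.congr'
  filter_upwards [eventually_gt_atTop (max p 1 : ℝ)] with m hm
  have hm1 : (1:ℝ) < m := lt_of_le_of_lt (le_max_right _ _) hm
  have hm0 : (0:ℝ) < m := by linarith
  have hmp : p < m := lt_of_le_of_lt (le_max_left _ _) hm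
  have ha0 : (0:ℝ) < m / p := by positivity
  have hb0 : (0:ℝ) < m + 1 - m / p := by
    have : m / p < m := by rw [div_lt_iff₀ hp0]; nlinarith
    linarith
  have hc0 : (0:ℝ) < m + 1 := by linarith
  rw [Real.log_div hb0.ne' hm0.ne', Real.log_div hc0.ne' hm0.ne',
    show Real.log (1/p) = Real.log (m/p) - Real.log m by
      rw [Real.log_div hm0.ne' hp0.ne', Real.log_div one_ne_zero hp0.ne', Real.log_one]
      ring]
  field_simp
  ring

/-- limit of the rescaled Sobolev constants. -/
theorem limit_rescaled_sobolev_constants (N : ℕ) (p : ℝ) (hN : 2 ≤ N) (hp : 1 < p)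
    (hpN : p < (N : ℝ)) :
    Tendsto (fun m : ℝ =>
        (Real.pi ^ (p / 2) * m * ((m - p) / (p - 1)) ^ (p - 1) *
            ((Real.Gamma (m / p) * Real.Gamma (m + 1 - m / p)) /
              (Real.Gamma m * Real.Gamma (1 + m / 2))) ^ (p / m)) *
          (((N : ℝ) * Real.pi ^ ((N : ℝ) / 2) / Real.Gamma (1 + (N : ℝ) / 2)) /
              (m * Real.pi ^ (m / 2) / Real.Gamma (1 + m / 2))) ^ (p / m) *
          (((N : ℝ) - p) / (m - p)) ^ (p - p / m))
      atTop (nhds ((((N : ℝ) - p) / p) ^ p)) := by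
  have hp0 : (0:ℝ) < p := by linarith
  have hp1 : (0:ℝ) < p - 1 := by linarith
  have hNp : (0:ℝ) < (N:ℝ) - p := by linarith
  have hN0 : (0:ℝ) < (N:ℝ) := by linarith
  have hπ := Real.pi_pos
  have gN : 0 < Real.Gamma (1 + (N:ℝ)/2) := Real.Gamma_pos_of_pos (by positivity)
  set ω : ℝ := (N : ℝ) * Real.pi ^ ((N : ℝ) / 2) / Real.Gamma (1 + (N : ℝ) / 2) with hωdef
  have hω : 0 < ω := div_pos (mul_pos hN0 (rpow_pos_of_pos hπ _)) gN
  -- T function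
  set c' : ℝ := (1 / p) * Real.log (1 / p) + (1 - 1 / p) * Real.log (1 - 1 / p) with hc'
  set T : ℝ → ℝ := fun m =>
    (Real.log m - Real.log (m - p)) + (p/m) * Real.log (m - p) - (p-1) * Real.log (p-1)
    + (p/m) * (Real.log (Real.Gamma (m / p)) + Real.log (Real.Gamma (m + 1 - m / p))
        - Real.log (Real.Gamma (m + 1)))
    + (p/m) * Real.log ω + (p - p/m) * Real.log ((N:ℝ) - p) with hT
  -- basic tendstos
  have hp_m : Tendsto (fun m : ℝ => p / m) atTop (nhds 0) :=
    tendsto_const_nhds.div_atTop tendsto_id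
  have t1base : Tendsto (fun m : ℝ => (m - p)/m) atTop (nhds 1) := by
    have h := (tendsto_const_nhds (x := (1:ℝ))).sub hp_m
    rw [sub_zero] at h
    apply (h.congr' _ : Tendsto _ atTop (nhds (1:ℝ)))
    filter_upwards [eventually_gt_atTop (0:ℝ)] with m hm
    field_simp
  have t1 : Tendsto (fun m : ℝ => Real.log m - Real.log (m - p)) atTop (nhds 0) := by
    have h := (t1base.log one_ne_zero).neg
    rw [Real.log_one, neg_zero] at h
    apply h.congr'
    filter_upwards [eventually_gt_atTop p, eventually_gt_atTop (0:ℝ)] with m hm hm0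
    rw [Real.log_div (by linarith : m - p ≠ 0) hm0.ne']
    ring
  have hmt : Tendsto (fun m : ℝ => m - p) atTop atTop :=
    tendsto_atTop_add_const_right _ (-p) tendsto_id
  have hlg : Tendsto (fun x : ℝ => Real.log x / x) atTop (nhds 0) :=
    Real.isLittleO_log_id_atTop.tendsto_div_nhds_zero
  have t2 : Tendsto (fun m : ℝ => (p/m) * Real.log (m - p)) atTop (nhds 0) := by
    have hcomp : Tendsto (fun m : ℝ => Real.log (m - p) / (m - p)) atTop (nhds 0) := by
      have := hlg.comp hmt
      exact this
    have h := (hcomp.mul t1base).const_mul p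
    rw [show p * (0 * 1) = 0 by ring] at h
    apply h.congr'
    filter_upwards [eventually_gt_atTop p, eventually_gt_atTop (0:ℝ)] with m hm hm0
    have : m - p ≠ 0 := by linarith
    field_simp
  have t4 : Tendsto (fun m : ℝ => (p/m) * (Real.log (Real.Gamma (m / p))
      + Real.log (Real.Gamma (m + 1 - m / p)) - Real.log (Real.Gamma (m + 1)))) atTop
      (nhds (p * c')) := by
    have h := (key_gamma_ratio p hp).const_mul p
    apply h.congr
    intro m
    ring
  have t5 : Tendsto (fun m : ℝ => (p/m) * Real.log ω) atTop (nhds 0) := by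
    have h := hp_m.mul_const (Real.log ω)
    rwa [zero_mul] at h
  have t6 : Tendsto (fun m : ℝ => (p - p/m) * Real.log ((N:ℝ) - p)) atTop
      (nhds (p * Real.log ((N:ℝ) - p))) := by
    have h := ((tendsto_const_nhds (x := p)).sub hp_m).mul_const (Real.log ((N:ℝ) - p))
    rwa [sub_zero] at h
  have hσ : (0:ℝ) + 0 - (p-1) * Real.log (p-1) + p * c' + 0 + p * Real.log ((N:ℝ) - p)
      = p * (Real.log ((N:ℝ) - p) - Real.log p) := by
    rw [hc', show (1:ℝ) - 1/p = (p-1)/p by field_simp,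
      Real.log_div hp1.ne' hp0.ne', one_div, Real.log_inv]
    field_simp
    ring
  have hT_tendsto : Tendsto T atTop (nhds (p * (Real.log ((N:ℝ) - p) - Real.log p))) := by
    rw [← hσ]
    exact ((((t1.add t2).sub tendsto_const_nhds).add t4).add t5).add t6
  -- pass to exp
  have hexp : Tendsto (fun m => Real.exp (T m)) atTop
      (nhds (Real.exp (p * (Real.log ((N:ℝ) - p) - Real.log p)))) :=
    (Real.continuous_exp.tendsto _).comp hT_tendsto
  have hlim : Real.exp (p * (Real.log ((N:ℝ) - p) - Real.log p)) = (((N:ℝ) - p) / p) ^ p := by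
    rw [Real.rpow_def_of_pos (div_pos hNp hp0), Real.log_div hNp.ne' hp0.ne']
    ring_nf
  rw [hlim] at hexp
  apply hexp.congr'
  filter_upwards [eventually_gt_atTop p, eventually_gt_atTop (0:ℝ),
    eventually_gt_atTop (1:ℝ)] with m hmp hm0 hm1
  have hmp0 : (0:ℝ) < m - p := by linarith
  have ha0 : (0:ℝ) < m / p := by positivity
  have hb0 : (0:ℝ) < m + 1 - m / p := by
    have : m / p < m := by rw [div_lt_iff₀ hp0]; nlinarith
    linarith
  have ga : 0 < Real.Gamma (m/p) := Real.Gamma_pos_of_pos ha0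
  have gb : 0 < Real.Gamma (m + 1 - m/p) := Real.Gamma_pos_of_pos hb0
  have gm : 0 < Real.Gamma m := Real.Gamma_pos_of_pos hm0
  have gh : 0 < Real.Gamma (1 + m/2) := Real.Gamma_pos_of_pos (by linarith)
  have hA : (0:ℝ) < Real.pi ^ (p/2) := rpow_pos_of_pos hπ _
  have hC : (0:ℝ) < ((m - p)/(p-1)) ^ (p-1) := rpow_pos_of_pos (div_pos hmp0 hp1) _
  have hQ : (0:ℝ) < Real.Gamma (m/p) * Real.Gamma (m + 1 - m/p) /
      (Real.Gamma m * Real.Gamma (1 + m/2)) := div_pos (mul_pos ga gb) (mul_pos gm gh)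
  have hD : (0:ℝ) < (Real.Gamma (m/p) * Real.Gamma (m + 1 - m/p) /
      (Real.Gamma m * Real.Gamma (1 + m/2))) ^ (p/m) := rpow_pos_of_pos hQ _
  have hW : (0:ℝ) < m * Real.pi ^ (m/2) / Real.Gamma (1 + m/2) :=
    div_pos (mul_pos hm0 (rpow_pos_of_pos hπ _)) gh
  have hE : (0:ℝ) < (ω / (m * Real.pi ^ (m/2) / Real.Gamma (1 + m/2))) ^ (p/m) :=
    rpow_pos_of_pos (div_pos hω hW) _
  have hFp : (0:ℝ) < (((N:ℝ) - p)/(m - p)) ^ (p - p/m) :=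
    rpow_pos_of_pos (div_pos hNp hmp0) _
  have hFpos : (0:ℝ) < Real.pi ^ (p/2) * m * ((m - p)/(p-1)) ^ (p-1) *
      (Real.Gamma (m/p) * Real.Gamma (m + 1 - m/p) /
        (Real.Gamma m * Real.Gamma (1 + m/2))) ^ (p/m) *
      (ω / (m * Real.pi ^ (m/2) / Real.Gamma (1 + m/2))) ^ (p/m) *
      (((N:ℝ) - p)/(m - p)) ^ (p - p/m) := by positivity
  rw [← Real.exp_log hFpos]
  congr 1
  rw [hT]
  beta_reduce
  -- expand log of the product
  rw [Real.log_mul (by positivity) hFp.ne', Real.log_mul (by positivity) hE.ne',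
    Real.log_mul (by positivity) hD.ne', Real.log_mul (by positivity) hC.ne',
    Real.log_mul hA.ne' hm0.ne',
    Real.log_rpow hπ, Real.log_rpow (div_pos hmp0 hp1), Real.log_rpow hQ,
    Real.log_rpow (div_pos hω hW), Real.log_rpow (div_pos hNp hmp0),
    Real.log_div (mul_pos ga gb).ne' (mul_pos gm gh).ne',
    Real.log_mul ga.ne' gb.ne', Real.log_mul gm.ne' gh.ne',
    Real.log_div hω.ne' hW.ne',
    Real.log_div (mul_pos hm0 (rpow_pos_of_pos hπ _)).ne' gh.ne',
    Real.log_mul hm0.ne' (rpow_pos_of_pos hπ _).ne', Real.log_rpow hπ,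
    Real.log_div hNp.ne' hmp0.ne',
    Real.log_div hmp0.ne' hp1.ne',
    Real.Gamma_add_one hm0.ne', Real.log_mul hm0.ne' gm.ne']
  field_simp
  ring

end SobolevLimitAux
end
end

section
/- Dimension-reduction transformation identities: Let 1 < p < N < m. Let u be a radial function in C_c^1(ℝ^m) and define the radial function w on ℝ^N by u(r) = w(t), where r, t > 0 are related by t^{−(N−p)/(p−1)} = r^{−(m−p)/(p−1)}. Then: (1) ∫_{ℝ^m}|∇u(x)|^p dx = (ω_{m−1}/ω_{N−1}) · ((m−p)/(N−p))^{p−1} · ∫_{ℝ^N}|∇w(y)|^p dy, and (2) ∫_{ℝ^m}|u(x)|^{mp/(m−p)} dx = (ω_{m−1}/ω_{N−1}) · ((N−p)/(m−p)) · ∫_{ℝ^N}|w(y)|^{mp/(m−p)} |y|^{−(m−N)p/(m−p)} dy. -/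
open MeasureTheory Metric Set Filter

noncomputable section

/-- the surface area `ω_{k-1}` of the unit sphere `S^{k-1} ⊆ ℝ^k`. -/
def sphArea (k : ℕ) : ℝ :=
  (k : ℝ) * (volume (ball (0 : EuclideanSpace ℝ (Fin k)) 1)).toReal

section AuxDR

variable {E : Type*} [NormedAddCommGroup E] [InnerProductSpace ℝ E]

lemma auxDR_hasFDerivAt_norm {x : E} (hx : x ≠ 0) :
    HasFDerivAt (fun y : E => ‖y‖) (‖x‖⁻¹ • innerSL ℝ x) x := by
  have hx' : (0:ℝ) < ‖x‖ := norm_pos_iff.mpr hx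
  have h1 : HasFDerivAt (fun y : E => ‖y‖ ^ 2) (2 • innerSL ℝ x) x :=
    (hasStrictFDerivAt_norm_sq x).hasFDerivAt
  have h2 : HasDerivAt Real.sqrt (1 / (2 * Real.sqrt (‖x‖ ^ 2))) (‖x‖ ^ 2) :=
    Real.hasDerivAt_sqrt (by positivity)
  have h3 := h2.comp_hasFDerivAt x h1
  have h4 : (Real.sqrt ∘ fun y : E => ‖y‖ ^ 2) = fun y : E => ‖y‖ := by
    funext y; simp [Function.comp, Real.sqrt_sq (norm_nonneg y)]
  rw [h4] at h3
  convert h3 using 1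
  · rfl
  · rfl
  ext y
  rw [Real.sqrt_sq (norm_nonneg x)]
  simp only [ContinuousLinearMap.coe_smul', Pi.smul_apply, smul_eq_mul,
    ContinuousLinearMap.smul_apply]
  rw [two_smul]
  field_simp
  ring

lemma auxDR_norm_fderiv {V : ℝ → ℝ} {x : E} (hx : x ≠ 0) {V' : ℝ}
    (hV : HasDerivAt V V' ‖x‖) :
    ‖fderiv ℝ (fun z : E => V ‖z‖) x‖ = |V'| := by
  have hx' : (0:ℝ) < ‖x‖ := norm_pos_iff.mpr hx
  have h := hV.comp_hasFDerivAt x (auxDR_hasFDerivAt_norm hx)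
  have h' : HasFDerivAt (fun z : E => V ‖z‖) (V' • ‖x‖⁻¹ • innerSL ℝ x) x := h
  rw [h'.fderiv, norm_smul, norm_smul, innerSL_apply_norm, Real.norm_eq_abs,
    Real.norm_eq_abs, abs_of_nonneg (inv_nonneg.mpr hx'.le),
    inv_mul_cancel₀ hx'.ne', mul_one]

lemma auxDR_subst {α : ℝ} (hα : 0 < α) (ψ : ℝ → ℝ) (aexp : ℝ) :
    ∫ t in Ioi (0:ℝ), t ^ (α * (aexp + 1) - 1) * ψ (t ^ α)
      = α⁻¹ * ∫ r in Ioi (0:ℝ), r ^ aexp * ψ r := by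
  rw [← integral_comp_rpow_Ioi (fun r => r ^ aexp * ψ r) hα.ne', ← integral_const_mul]
  refine setIntegral_congr_fun measurableSet_Ioi fun t ht => ?_
  have ht' : (0:ℝ) < t := ht
  simp only [smul_eq_mul]
  rw [abs_of_pos hα, ← Real.rpow_mul ht'.le,
    show α * (aexp + 1) - 1 = (α - 1) + α * aexp by ring, Real.rpow_add ht']
  field_simp

lemma auxDR_radial_integral (k : ℕ) (hk : 0 < k) (f : ℝ → ℝ) :
    ∫ x : EuclideanSpace ℝ (Fin k), f ‖x‖
      = sphArea k * ∫ r in Ioi (0:ℝ), r ^ ((k:ℝ) - 1) * f r := by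
  have hone : ‖EuclideanSpace.single (⟨0, hk⟩ : Fin k) (1:ℝ)‖ = 1 := by
    rw [EuclideanSpace.norm_single]; norm_num
  haveI : Nontrivial (EuclideanSpace ℝ (Fin k)) := by
    refine nontrivial_of_ne (EuclideanSpace.single (⟨0, hk⟩ : Fin k) (1:ℝ)) 0 ?_
    intro h; rw [h] at hone; simp at hone
  rw [MeasureTheory.integral_fun_norm_addHaar volume f]
  simp only [finrank_euclideanSpace_fin, nsmul_eq_mul, smul_eq_mul, sphArea]
  rw [mul_assoc]
  congr 1
  rw [← integral_const_mul, ← integral_const_mul]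
  refine setIntegral_congr_fun measurableSet_Ioi fun r hr => ?_
  have : (r : ℝ) ^ ((k:ℝ) - 1) = r ^ (k - 1 : ℕ) := by
    rw [← Real.rpow_natCast r (k - 1), Nat.cast_sub hk, Nat.cast_one]
  rw [this]
  rfl

end AuxDR

set_option maxHeartbeats 1000000 in
/-- dimension-reduction transformation identities. -/
theorem dimension_reduction (N m : ℕ) (p : ℝ) (hN : 2 ≤ N) (hp : 1 < p)
    (hpN : p < (N : ℝ)) (hNm : N < m)
    (u : EuclideanSpace ℝ (Fin m) → ℝ) (hu1 : ContDiff ℝ 1 u) (hu2 : HasCompactSupport u)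
    (hurad : ∀ x y : EuclideanSpace ℝ (Fin m), ‖x‖ = ‖y‖ → u x = u y) :
    let w : HS.Euc N → ℝ := fun y =>
      u ((‖y‖ ^ (((N : ℝ) - p) / ((m : ℝ) - p))) •
        EuclideanSpace.single (⟨0, by omega⟩ : Fin m) (1 : ℝ))
    (∫ x : EuclideanSpace ℝ (Fin m), ‖fderiv ℝ u x‖ ^ p) =
        (sphArea m / sphArea N) * (((m : ℝ) - p) / ((N : ℝ) - p)) ^ (p - 1) *
          (∫ y : HS.Euc N, ‖fderiv ℝ w y‖ ^ p) ∧
      (∫ x : EuclideanSpace ℝ (Fin m), |u x| ^ ((m : ℝ) * p / ((m : ℝ) - p))) =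
        (sphArea m / sphArea N) * (((N : ℝ) - p) / ((m : ℝ) - p)) *
          (∫ y : HS.Euc N, |w y| ^ ((m : ℝ) * p / ((m : ℝ) - p)) *
            ‖y‖ ^ (-(((m : ℝ) - (N : ℝ)) * p / ((m : ℝ) - p)))) := by
  have hm0 : 0 < m := by omega
  have hN0 : 0 < N := by omega
  have hmR : (N : ℝ) < (m : ℝ) := by exact_mod_cast hNm
  have hNR : (2 : ℝ) ≤ (N : ℝ) := by exact_mod_cast hN
  have hNp : (0:ℝ) < (N : ℝ) - p := by linarith
  have hmp : (0:ℝ) < (m : ℝ) - p := by linarith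
  set α : ℝ := ((N : ℝ) - p) / ((m : ℝ) - p) with hαdef
  set γ : ℝ := ((m : ℝ) - (N : ℝ)) * p / ((m : ℝ) - p) with hγdef
  set q : ℝ := (m : ℝ) * p / ((m : ℝ) - p) with hqdef
  have hα : 0 < α := div_pos hNp hmp
  have hkey : α * ((m:ℝ) - p) = (N:ℝ) - p := div_mul_cancel₀ _ hmp.ne'
  have hγkey : γ * ((m:ℝ) - p) = ((m:ℝ) - (N:ℝ)) * p := div_mul_cancel₀ _ hmp.ne'
  intro w
  set e : EuclideanSpace ℝ (Fin m) :=
    EuclideanSpace.single (⟨0, by omega⟩ : Fin m) (1:ℝ) with he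
  have hne : ‖e‖ = 1 := by rw [he, EuclideanSpace.norm_single]; norm_num
  have hsm : ∀ r : ℝ, ‖r • e‖ = |r| := fun r => by
    rw [norm_smul, hne, Real.norm_eq_abs, mul_one]
  set U : ℝ → ℝ := fun r => u (r • e) with hUdef
  have hux : ∀ x, u x = U ‖x‖ := fun x =>
    hurad x (‖x‖ • e) ((hsm ‖x‖).trans (abs_of_nonneg (norm_nonneg x))).symm
  set DU : ℝ → ℝ := fun r => fderiv ℝ u (r • e) e with hDUdef
  have hUdiff : ∀ r : ℝ, HasDerivAt U (DU r) r := by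
    intro r
    have h1 : HasFDerivAt u (fderiv ℝ u (r • e)) (r • e) :=
      (hu1.differentiable one_ne_zero (r • e)).hasFDerivAt
    have h2 : HasDerivAt (fun s : ℝ => s • e) e r := by
      simpa using (hasDerivAt_id r).smul_const e
    exact h1.comp_hasDerivAt r h2
  set W : ℝ → ℝ := fun t => U (t ^ α) with hWdef
  have hwW : ∀ y : HS.Euc N, w y = W ‖y‖ := fun y => rfl
  set DW : ℝ → ℝ := fun t => DU (t ^ α) * (α * t ^ (α - 1)) with hDWdef
  have hWdiff : ∀ t : ℝ, 0 < t → HasDerivAt W (DW t) t := by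
    intro t ht
    have h2 : HasDerivAt (fun s : ℝ => s ^ α) (α * t ^ (α - 1)) t :=
      Real.hasDerivAt_rpow_const (Or.inl ht.ne')
    exact (hUdiff (t ^ α)).comp t h2
  have hnzm : ∀ᵐ x : EuclideanSpace ℝ (Fin m) ∂volume, x ≠ 0 := by
    haveI : Nontrivial (EuclideanSpace ℝ (Fin m)) := by
      refine nontrivial_of_ne e 0 fun h => ?_
      rw [h] at hne; simp at hne
    rw [MeasureTheory.ae_iff]
    simpa using MeasureTheory.measure_singleton (0 : EuclideanSpace ℝ (Fin m))
  have hnzN : ∀ᵐ y : HS.Euc N ∂volume, y ≠ 0 := by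
    have h1 : ‖EuclideanSpace.single (⟨0, hN0⟩ : Fin N) (1:ℝ)‖ = 1 := by
      rw [EuclideanSpace.norm_single]; norm_num
    haveI : Nontrivial (HS.Euc N) := by
      refine nontrivial_of_ne (EuclideanSpace.single (⟨0, hN0⟩ : Fin N) (1:ℝ)) 0 fun h => ?_
      rw [h] at h1; simp at h1
    rw [MeasureTheory.ae_iff]
    simpa using MeasureTheory.measure_singleton (0 : HS.Euc N)
  have hsphN : 0 < sphArea N := by
    apply mul_pos (by exact_mod_cast hN0)
    exact ENNReal.toReal_pos (Metric.measure_ball_pos volume (0 : HS.Euc N) one_pos).ne'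
      MeasureTheory.measure_ball_lt_top.ne
  have hfin : u = fun x => U ‖x‖ := funext hux
  constructor
  · -- gradient identity
    have haeM : (fun x : EuclideanSpace ℝ (Fin m) => ‖fderiv ℝ u x‖ ^ p)
        =ᵐ[volume] fun x => |DU ‖x‖| ^ p := by
      filter_upwards [hnzm] with x hx
      have h5 : fderiv ℝ u x = fderiv ℝ (fun z => U ‖z‖) x := by rw [← hfin]
      simp only [h5, auxDR_norm_fderiv hx (hUdiff ‖x‖)]
    have haeN : (fun y : HS.Euc N => ‖fderiv ℝ w y‖ ^ p)
        =ᵐ[volume] fun y => |DW ‖y‖| ^ p := by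
      filter_upwards [hnzN] with y hy
      have hwfun : w = fun z => W ‖z‖ := funext hwW
      have hy' : (0:ℝ) < ‖y‖ := norm_pos_iff.mpr hy
      simp only [hwfun, auxDR_norm_fderiv hy (hWdiff ‖y‖ hy')]
    have RI1 : (∫ x : EuclideanSpace ℝ (Fin m), |DU ‖x‖| ^ p)
        = sphArea m * ∫ r in Set.Ioi (0:ℝ), r ^ ((m:ℝ) - 1) * |DU r| ^ p :=
      auxDR_radial_integral m hm0 (fun r => |DU r| ^ p)
    have RI2 : (∫ y : HS.Euc N, |DW ‖y‖| ^ p)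
        = sphArea N * ∫ t in Set.Ioi (0:ℝ), t ^ ((N:ℝ) - 1) * |DW t| ^ p :=
      auxDR_radial_integral N hN0 (fun t => |DW t| ^ p)
    rw [MeasureTheory.integral_congr_ae haeM, MeasureTheory.integral_congr_ae haeN,
      RI1, RI2]
    have h3 : α ^ p * α⁻¹ = α ^ (p - 1) := by
      rw [Real.rpow_sub hα, Real.rpow_one]; ring
    have hsub : (∫ t in Set.Ioi (0:ℝ), t ^ ((N:ℝ) - 1) * |DW t| ^ p)
        = α ^ (p - 1) * ∫ r in Set.Ioi (0:ℝ), r ^ ((m:ℝ) - 1) * |DU r| ^ p := by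
      have hS := auxDR_subst hα (fun s => |DU s| ^ p) ((m:ℝ) - 1)
      beta_reduce at hS
      rw [← h3, mul_assoc, ← hS, ← integral_const_mul]
      refine setIntegral_congr_fun measurableSet_Ioi fun t ht => ?_
      have ht' : (0:ℝ) < t := ht
      have htp : (0:ℝ) < α * t ^ (α - 1) := mul_pos hα (Real.rpow_pos_of_pos ht' _)
      simp only [hDWdef]
      rw [abs_mul, Real.mul_rpow (abs_nonneg _) (abs_nonneg _), abs_of_pos htp,
        Real.mul_rpow hα.le (Real.rpow_pos_of_pos ht' _).le,
        ← Real.rpow_mul ht'.le,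
        show α * (((m:ℝ) - 1) + 1) - 1 = ((N:ℝ) - 1) + (α - 1) * p from by
          linear_combination hkey,
        Real.rpow_add ht']
      ring
    rw [hsub]
    have h1 : (((m:ℝ) - p) / ((N:ℝ) - p)) = α⁻¹ := by rw [hαdef, inv_div]
    have h2 : α⁻¹ ^ (p - 1) = (α ^ (p - 1))⁻¹ := Real.inv_rpow hα.le _
    have h4 : (0:ℝ) < α ^ (p - 1) := Real.rpow_pos_of_pos hα _
    rw [h1, h2]
    field_simp [hsphN.ne', h4.ne']
  · -- Sobolev term identity
    have hI1 : (∫ x : EuclideanSpace ℝ (Fin m), |u x| ^ q)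
        = ∫ x : EuclideanSpace ℝ (Fin m), |U ‖x‖| ^ q := by
      simp only [hux]
    have hI2 : (∫ y : HS.Euc N, |w y| ^ q * ‖y‖ ^ (-γ))
        = ∫ y : HS.Euc N, |W ‖y‖| ^ q * ‖y‖ ^ (-γ) := by
      simp only [hwW]
    have RI1 : (∫ x : EuclideanSpace ℝ (Fin m), |U ‖x‖| ^ q)
        = sphArea m * ∫ r in Set.Ioi (0:ℝ), r ^ ((m:ℝ) - 1) * |U r| ^ q :=
      auxDR_radial_integral m hm0 (fun r => |U r| ^ q)
    have RI2 : (∫ y : HS.Euc N, |W ‖y‖| ^ q * ‖y‖ ^ (-γ))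
        = sphArea N * ∫ t in Set.Ioi (0:ℝ), t ^ ((N:ℝ) - 1) * (|W t| ^ q * t ^ (-γ)) :=
      auxDR_radial_integral N hN0 (fun t => |W t| ^ q * t ^ (-γ))
    rw [hI1, hI2, RI1, RI2]
    have hsub : (∫ t in Set.Ioi (0:ℝ), t ^ ((N:ℝ) - 1) * (|W t| ^ q * t ^ (-γ)))
        = α⁻¹ * ∫ r in Set.Ioi (0:ℝ), r ^ ((m:ℝ) - 1) * |U r| ^ q := by
      have hS := auxDR_subst hα (fun s => |U s| ^ q) ((m:ℝ) - 1)
      beta_reduce at hS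
      rw [← hS]
      refine setIntegral_congr_fun measurableSet_Ioi fun t ht => ?_
      have ht' : (0:ℝ) < t := ht
      simp only [hWdef]
      have hexp2 : α * (((m:ℝ) - 1) + 1) - 1 = ((N:ℝ) - 1) + (-γ) := by
        rw [hαdef, hγdef]; field_simp; ring
      rw [hexp2, Real.rpow_add ht']
      ring
    rw [hsub]
    field_simp [hsphN.ne', hα.ne']
end
end
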